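/- arXiv:1806.05577 — 10 statements merged into one kernel-verified Lean document; each statement's English description precedes it below -/
import Mathlib

section
/- Let X be a real random variable, u non-decreasing, v strictly increasing, with square-integrable images. If Cov(u(X), v(X)) = 0, then u is almost surely constant on the support of X (i.e. u(X) is an a.s. constant random variable). -/
/-!
For independent copies `X₁, X₂` of `X`, `2 Cov(u(X), v(X)) = E[(u(X₁) - u(X₂)) (v(X₁) - v(X₂))]`,
realised on the product space `μ.prod μ`. Since `u` and `v` are both monotone the integrand
is nonnegative, so vanishing covariance forces it to vanish almost surely; as `v` is injective,
this means `u(X₁) = u(X₂)` almost surely, and fixing a good value of `X₁` makes `u(X)` a.s. constant.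
-/

open MeasureTheory ProbabilityTheory

lemma MeasureTheory.exists_ae_eq_const_of_ae_prod_eq {Ω α : Type*} [MeasurableSpace Ω]
    {μ : Measure Ω} [SFinite μ] [NeZero μ] {f : Ω → α}
    (h : ∀ᵐ p ∂(μ.prod μ), f p.1 = f p.2) : ∃ c, ∀ᵐ ω ∂μ, f ω = c := by
  obtain ⟨ω₀, hω₀⟩ := (Measure.ae_ae_of_ae_prod h).exists
  exact ⟨f ω₀, hω₀.mono fun _ h ↦ h.symm⟩

namespace ProbabilityTheory

variable {Ω Ω' : Type*} [MeasurableSpace Ω] [MeasurableSpace Ω'] {μ : Measure Ω}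
  {ν : Measure Ω'} {X Y : Ω → ℝ}

lemma covariance_comp_fst_comp_fst_prod [IsProbabilityMeasure ν]
    (hX : AEStronglyMeasurable X μ) (hY : AEStronglyMeasurable Y μ) :
    cov[fun p ↦ X p.1, fun p ↦ Y p.1; μ.prod ν] = cov[X, Y; μ] := by
  have hfst : (μ.prod ν).map Prod.fst = μ := Measure.fst_prod
  rw [← covariance_map_fun (by rwa [hfst]) (by rwa [hfst]) measurable_fst.aemeasurable, hfst]

lemma covariance_comp_snd_comp_snd_prod [IsProbabilityMeasure μ] [SFinite ν] {X Y : Ω' → ℝ}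
    (hX : AEStronglyMeasurable X ν) (hY : AEStronglyMeasurable Y ν) :
    cov[fun p ↦ X p.2, fun p ↦ Y p.2; μ.prod ν] = cov[X, Y; ν] := by
  have hsnd : (μ.prod ν).map Prod.snd = ν := Measure.snd_prod
  rw [← covariance_map_fun (by rwa [hsnd]) (by rwa [hsnd]) measurable_snd.aemeasurable, hsnd]

lemma integral_comp_fst_sub_comp_snd_prod [IsFiniteMeasure μ] (hX : Integrable X μ) :
    ∫ p, (X p.1 - X p.2) ∂(μ.prod μ) = 0 := by
  rw [integral_sub (hX.comp_fst μ) (hX.comp_snd μ), integral_fun_fst, integral_fun_snd, sub_self]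

variable [IsProbabilityMeasure μ]

lemma two_mul_covariance_eq_integral_prod (hX : MemLp X 2 μ) (hY : MemLp Y 2 μ) :
    2 * cov[X, Y; μ] = ∫ p, (X p.1 - X p.2) * (Y p.1 - Y p.2) ∂(μ.prod μ) := by
  have hX₁ := hX.comp_fst μ
  have hX₂ := hX.comp_snd μ
  have hY₁ := hY.comp_fst μ
  have hY₂ := hY.comp_snd μ
  calc 2 * cov[X, Y; μ]
      = cov[fun p ↦ X p.1 - X p.2, fun p ↦ Y p.1 - Y p.2; μ.prod μ] := by
        rw [covariance_fun_sub_fun_sub hX₁ hX₂ hY₁ hY₂,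
          covariance_comp_fst_comp_fst_prod hX.1 hY.1, covariance_comp_snd_comp_snd_prod hX.1 hY.1,
          covariance_fst_snd_prod hX hY, covariance_comm (X := fun p : Ω × Ω ↦ X p.2),
          covariance_fst_snd_prod hY hX]
        ring
    _ = ∫ p, (X p.1 - X p.2) * (Y p.1 - Y p.2) ∂(μ.prod μ) := by
        simp only [covariance, integral_comp_fst_sub_comp_snd_prod (hX.integrable one_le_two),
          integral_comp_fst_sub_comp_snd_prod (hY.integrable one_le_two), sub_zero]

lemma ae_prod_sub_mul_sub_eq_zero_of_covariance_eq_zero (hX : MemLp X 2 μ) (hY : MemLp Y 2 μ)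
    (hXY : Monovary X Y) (h : cov[X, Y; μ] = 0) :
    ∀ᵐ p ∂(μ.prod μ), (X p.1 - X p.2) * (Y p.1 - Y p.2) = 0 := by
  have hint : Integrable (fun p ↦ (X p.1 - X p.2) * (Y p.1 - Y p.2)) (μ.prod μ) :=
    ((hX.comp_fst μ).sub (hX.comp_snd μ)).integrable_mul ((hY.comp_fst μ).sub (hY.comp_snd μ))
  refine (integral_eq_zero_iff_of_nonneg
    (fun p : Ω × Ω ↦ hXY.sub_mul_sub_nonneg p.2 p.1) hint).1 ?_
  rw [← two_mul_covariance_eq_integral_prod hX hY, h, mul_zero]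

end ProbabilityTheory

theorem chebyshev_other_inequality_equality_case_general
    {Ω : Type*} [MeasurableSpace Ω] (μ : Measure Ω) [IsProbabilityMeasure μ]
    (X : Ω → ℝ) (u v : ℝ → ℝ)
    (hu : Monotone u) (hv : StrictMono v)
    (hu2 : MemLp (fun ω => u (X ω)) 2 μ)
    (hv2 : MemLp (fun ω => v (X ω)) 2 μ)
    (hcov : (∫ ω, u (X ω) * v (X ω) ∂μ) = (∫ ω, u (X ω) ∂μ) * ∫ ω, v (X ω) ∂μ) :
    ∃ c : ℝ, ∀ᵐ ω ∂μ, u (X ω) = c := by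
  have hmonovary : Monovary (fun ω ↦ u (X ω)) (fun ω ↦ v (X ω)) :=
    (hu.monovary hv.monotone).comp_right X
  have hcov_zero : cov[fun ω ↦ u (X ω), fun ω ↦ v (X ω); μ] = 0 := by
    rw [covariance_eq_sub hu2 hv2, sub_eq_zero]
    exact hcov
  refine exists_ae_eq_const_of_ae_prod_eq ?_
  filter_upwards [ae_prod_sub_mul_sub_eq_zero_of_covariance_eq_zero hu2 hv2 hmonovary hcov_zero]
    with p hp
  exact (mul_eq_zero.1 hp).elim sub_eq_zero.1
    fun hv_eq ↦ congrArg u (hv.injective (sub_eq_zero.1 hv_eq))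

/-- Equality case of Chebyshev's other inequality: if `u` is non-decreasing, `v` is strictly
increasing, both with square-integrable images, and `Cov(u(X), v(X)) = 0`, then `u(X)` is
an a.s. constant random variable. -/
theorem chebyshev_other_inequality_equality_case
    {Ω : Type*} [MeasurableSpace Ω] (μ : Measure Ω) [IsProbabilityMeasure μ]
    (X : Ω → ℝ) (hX : Measurable X) (u v : ℝ → ℝ)
    (hu : Monotone u) (hv : StrictMono v)
    (hu2 : MemLp (fun ω => u (X ω)) 2 μ)
    (hv2 : MemLp (fun ω => v (X ω)) 2 μ)
    (hcov : (∫ ω, u (X ω) * v (X ω) ∂μ) = (∫ ω, u (X ω) ∂μ) * ∫ ω, v (X ω) ∂μ) :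
    ∃ c : ℝ, ∀ᵐ ω ∂μ, u (X ω) = c :=
  chebyshev_other_inequality_equality_case_general μ X u v hu hv hu2 hv2 hcov
end

section
/- Let f: ℝ → ℝ₊ be a twice continuously differentiable probability density with potential φ = −log f strictly convex (φ'' > 0), and suppose φ''(x) ≥ 1/α for all x and some α > 0. If X has density f and g is continuously differentiable with g(X) ∈ L², then Var(g(X)) ≤ α·E[g'(X)²]. -/
/-!
Write `ψ = φ'` and `ρ = ψ f = -f'`. Since `ψ' ≥ 1/α`, `ψ` vanishes at some `m`, and
`|x - m| f(x) ≤ α |ρ(x)|` with `ρ ≥ 0` to the right of `m` and `ρ ≤ 0` to the left of it.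
For `x > m`, Cauchy–Schwarz on `[m, x]` gives
`f(x) (g x - g m)² ≤ (x - m) f(x) ∫_m^x g'² ≤ α ρ(x) ∫_m^x g'²`,
and integrating in `x` and exchanging the integrals, `∫_t^∞ ρ = f(t)` turns the right-hand side
into `α ∫_m^∞ f g'²`. The half-line `x < m` is the mirror image, so
`Var g(X) ≤ E (g X - g m)² ≤ α E g'(X)²`.
-/

open MeasureTheory ProbabilityTheory Set Filter Topology
open scoped ENNReal

theorem sq_sub_le_mul_integral_deriv_sq {g : ℝ → ℝ} (hg : ContDiff ℝ 1 g) {a b : ℝ}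
    (hab : a ≤ b) : (g b - g a) ^ 2 ≤ (b - a) * ∫ t in a..b, deriv g t ^ 2 := by
  have hg' : Continuous (deriv g) := hg.continuous_deriv le_rfl
  have hftc : ∫ t in a..b, deriv g t = g b - g a :=
    intervalIntegral.integral_deriv_eq_sub
      (fun x _ => (hg.differentiable one_ne_zero).differentiableAt) (hg'.intervalIntegrable a b)
  set L := b - a
  set c := g b - g a
  -- Cauchy–Schwarz in the form `0 ≤ ∫ (L g' - c)²`
  have hexp : ∫ t in a..b, (L * deriv g t - c) ^ 2
      = L ^ 2 * (∫ t in a..b, deriv g t ^ 2) - L * c ^ 2 := by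
    have hsq : ∀ t, (L * deriv g t - c) ^ 2
        = L ^ 2 * deriv g t ^ 2 - 2 * L * c * deriv g t + c ^ 2 := fun t => by ring
    simp_rw [hsq]
    rw [intervalIntegral.integral_add, intervalIntegral.integral_sub,
      intervalIntegral.integral_const_mul, intervalIntegral.integral_const_mul, hftc,
      intervalIntegral.integral_const]
    · simp only [smul_eq_mul, c, L]
      ring
    all_goals exact Continuous.intervalIntegrable (by fun_prop) _ _
  have hnn : 0 ≤ ∫ t in a..b, (L * deriv g t - c) ^ 2 :=
    intervalIntegral.integral_nonneg hab fun t _ => sq_nonneg _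
  rcases hab.eq_or_lt with rfl | hlt
  · simp [c]
  · have hL : 0 < L := sub_pos.2 hlt
    nlinarith

theorem lintegral_mul_lintegral_Ioc {ρ w : ℝ → ℝ≥0∞} (hρ : Measurable ρ)
    (hw : Measurable w) (a : ℝ) :
    ∫⁻ x, ρ x * ∫⁻ t in Ioc a x, w t
      = ∫⁻ t in Ioi a, w t * ∫⁻ x in Ici t, ρ x := by
  set S : Set (ℝ × ℝ) := {p | a < p.2 ∧ p.2 ≤ p.1}
  have hS : MeasurableSet S :=
    (measurableSet_lt measurable_const measurable_snd).inter
      (measurableSet_le measurable_snd measurable_fst)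
  set K : ℝ × ℝ → ℝ≥0∞ := S.indicator fun p => ρ p.1 * w p.2
  have hK : Measurable K := ((hρ.comp measurable_fst).mul (hw.comp measurable_snd)).indicator hS
  have hx : ∀ x, ∫⁻ t, K (x, t) = ρ x * ∫⁻ t in Ioc a x, w t := by
    intro x
    rw [← lintegral_const_mul _ hw, ← lintegral_indicator measurableSet_Ioc]
    rfl
  have ht : ∀ t,
      ∫⁻ x, K (x, t) = (Ioi a).indicator (fun t => w t * ∫⁻ x in Ici t, ρ x) t := by
    intro t
    by_cases hta : t ∈ Ioi a
    · rw [indicator_of_mem hta, mul_comm, ← lintegral_mul_const _ hρ,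
        ← lintegral_indicator measurableSet_Ici]
      congr 1 with x
      simp [K, S, indicator_apply, mem_Ioi.1 hta]
    · rw [indicator_of_notMem hta]
      simp [K, S, (notMem_Ioi.1 hta).not_gt]
  rw [← lintegral_indicator measurableSet_Ioi]
  simp_rw [← hx, ← ht]
  exact lintegral_lintegral_swap hK.aemeasurable

theorem AntitoneOn.tendsto_atTop_zero_of_integrableOn {f : ℝ → ℝ} {a : ℝ}
    (hanti : AntitoneOn f (Ici a)) (hf₀ : ∀ x ∈ Ici a, 0 ≤ f x)
    (hint : IntegrableOn f (Ici a)) : Tendsto f atTop (𝓝 0) := by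
  set F : ℝ → ℝ := fun x => f (max x a)
  have hF : Antitone F := fun x y hxy =>
    hanti (mem_Ici.2 (le_max_right _ _)) (mem_Ici.2 (le_max_right _ _)) (max_le_max hxy le_rfl)
  have hFf : F =ᶠ[atTop] f := by
    filter_upwards [eventually_ge_atTop a] with x hx
    simp [F, max_eq_left hx]
  have hFbdd : BddBelow (range F) :=
    ⟨0, by rintro _ ⟨x, rfl⟩; exact hf₀ _ (le_max_right x a)⟩
  set L := ⨅ x, F x
  have hlim : Tendsto f atTop (𝓝 L) := (tendsto_atTop_ciInf hF hFbdd).congr' hFf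
  suffices L = 0 by rwa [this] at hlim
  -- a positive constant `L ≤ f` would be integrable over a half-line
  by_contra hL
  have hL₀ : 0 ≤ L := le_ciInf fun y => hf₀ _ (le_max_right y a)
  have hLint : IntegrableOn (fun _ => L) (Ici a) := by
    refine hint.mono' aestronglyMeasurable_const ((ae_restrict_iff' measurableSet_Ici).2
      (.of_forall fun x hx => ?_))
    have hLF : L ≤ F x := ciInf_le hFbdd x
    rwa [Real.norm_of_nonneg hL₀, ← max_eq_left (mem_Ici.1 hx)]
  simp [integrableOn_const_iff, hL] at hLint

theorem lintegral_Ici_eq_of_hasDerivAt_neg {f ρ : ℝ → ℝ} {a : ℝ}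
    (hf : ∀ x ∈ Ici a, HasDerivAt f (-ρ x) x) (hρ : ∀ x ∈ Ioi a, 0 ≤ ρ x)
    (hlim : Tendsto f atTop (𝓝 0)) :
    ∫⁻ x in Ici a, ENNReal.ofReal (ρ x) = ENNReal.ofReal (f a) := by
  have hf' : ∀ x ∈ Ici a, HasDerivAt (fun y => -f y) (ρ x) x := fun x hx =>
    neg_neg (ρ x) ▸ (hf x hx).neg
  have hlim' : Tendsto (fun y => -f y) atTop (𝓝 0) := by simpa using hlim.neg
  rw [setLIntegral_congr Ioi_ae_eq_Ici.symm, ← ofReal_integral_eq_lintegral_ofReal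
    (integrableOn_Ioi_deriv_of_nonneg' hf' hρ hlim') ((ae_restrict_iff' measurableSet_Ioi).2
    (.of_forall hρ)), integral_Ioi_of_hasDerivAt_of_nonneg' hf' hρ hlim']
  simp

theorem lintegral_ofReal_mul_lintegral_Ioc {f ρ : ℝ → ℝ} {m : ℝ}
    (hf : ∀ x, HasDerivAt f (-ρ x) x) (hρ₀ : ∀ x ∈ Ioi m, 0 ≤ ρ x)
    (hlim : Tendsto f atTop (𝓝 0)) {w : ℝ → ℝ≥0∞} (hw : Measurable w) :
    ∫⁻ x, ENNReal.ofReal (ρ x) * ∫⁻ t in Ioc m x, w t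
      = ∫⁻ t in Ioi m, w t * ENNReal.ofReal (f t) := by
  have hρ : Measurable ρ := by
    have : ρ = fun x => -deriv f x := funext fun x => by rw [(hf x).deriv, neg_neg]
    exact this ▸ (measurable_deriv f).neg
  rw [lintegral_mul_lintegral_Ioc hρ.ennreal_ofReal hw]
  refine setLIntegral_congr_fun measurableSet_Ioi fun t ht => ?_
  rw [lintegral_Ici_eq_of_hasDerivAt_neg (fun x _ => hf x)
    (fun x hx => hρ₀ x (mem_Ioi.2 (ht.trans hx))) hlim]

theorem lintegral_Ioi_mul_sq_sub_le {f ρ g : ℝ → ℝ} {m α : ℝ} (hα : 0 < α)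
    (hf : ∀ x, HasDerivAt f (-ρ x) x) (hf₀ : ∀ x, 0 ≤ f x) (hint : IntegrableOn f (Ici m))
    (hρf : ∀ x, m < x → (x - m) * f x ≤ α * ρ x) (hg : ContDiff ℝ 1 g) :
    ∫⁻ x in Ioi m, ENNReal.ofReal (f x * (g x - g m) ^ 2)
      ≤ ENNReal.ofReal α * ∫⁻ x in Ioi m, ENNReal.ofReal (f x * deriv g x ^ 2) := by
  have hρ₀ : ∀ x ∈ Ioi m, 0 ≤ ρ x := fun x hx => nonneg_of_mul_nonneg_right
    ((mul_nonneg (sub_nonneg.2 (le_of_lt hx)) (hf₀ x)).trans (hρf x hx)) hα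
  have hlim : Tendsto f atTop (𝓝 0) := by
    refine AntitoneOn.tendsto_atTop_zero_of_integrableOn ?_ (fun x _ => hf₀ x) hint
    refine antitoneOn_of_hasDerivWithinAt_nonpos (convex_Ici m)
      (fun x _ => (hf x).continuousAt.continuousWithinAt) (fun x _ => (hf x).hasDerivWithinAt)
      fun x hx => ?_
    rw [interior_Ici] at hx
    exact neg_nonpos.2 (hρ₀ x hx)
  have hw : Continuous fun t => deriv g t ^ 2 := (hg.continuous_deriv le_rfl).pow 2
  have hpt : ∀ x ∈ Ioi m, ENNReal.ofReal (f x * (g x - g m) ^ 2) ≤ ENNReal.ofReal α *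
      (ENNReal.ofReal (ρ x) * ∫⁻ t in Ioc m x, ENNReal.ofReal (deriv g t ^ 2)) := by
    intro x hx
    have hmx : m ≤ x := le_of_lt hx
    set I := ∫ t in Ioc m x, deriv g t ^ 2
    have hI₀ : 0 ≤ I := setIntegral_nonneg measurableSet_Ioc fun t _ => sq_nonneg _
    have hcs : (g x - g m) ^ 2 ≤ (x - m) * I := by
      simpa only [intervalIntegral.integral_of_le hmx] using
        sq_sub_le_mul_integral_deriv_sq hg hmx
    have key : f x * (g x - g m) ^ 2 ≤ α * (ρ x * I) :=
      calc f x * (g x - g m) ^ 2 ≤ f x * ((x - m) * I) :=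
            mul_le_mul_of_nonneg_left hcs (hf₀ x)
        _ = ((x - m) * f x) * I := by ring
        _ ≤ (α * ρ x) * I := mul_le_mul_of_nonneg_right (hρf x hx) hI₀
        _ = α * (ρ x * I) := by ring
    rw [← ofReal_integral_eq_lintegral_ofReal (hw.integrableOn_Icc.mono_set Ioc_subset_Icc_self)
      (.of_forall fun t => sq_nonneg _), ← ENNReal.ofReal_mul (hρ₀ x hx),
      ← ENNReal.ofReal_mul hα.le]
    exact ENNReal.ofReal_le_ofReal key
  calc ∫⁻ x in Ioi m, ENNReal.ofReal (f x * (g x - g m) ^ 2)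
      ≤ ∫⁻ x in Ioi m, ENNReal.ofReal α *
          (ENNReal.ofReal (ρ x) * ∫⁻ t in Ioc m x, ENNReal.ofReal (deriv g t ^ 2)) :=
        setLIntegral_mono' measurableSet_Ioi hpt
    _ ≤ ∫⁻ x, ENNReal.ofReal α *
          (ENNReal.ofReal (ρ x) * ∫⁻ t in Ioc m x, ENNReal.ofReal (deriv g t ^ 2)) :=
        setLIntegral_le_lintegral _ _
    _ = ENNReal.ofReal α * ∫⁻ x in Ioi m, ENNReal.ofReal (f x * deriv g x ^ 2) := by
        simp_rw [lintegral_const_mul' _ _ ENNReal.ofReal_ne_top,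
          lintegral_ofReal_mul_lintegral_Ioc hf hρ₀ hlim hw.measurable.ennreal_ofReal,
          ← ENNReal.ofReal_mul (sq_nonneg _), mul_comm]

theorem setLIntegral_Ioi_comp_neg (F : ℝ → ℝ≥0∞) (m : ℝ) :
    ∫⁻ x in Ioi (-m), F (-x) = ∫⁻ x in Iio m, F x := by
  have := (Measure.measurePreserving_neg volume).setLIntegral_comp_preimage_emb
    measurableEmbedding_neg F (Iio m)
  rwa [neg_preimage, neg_Iio] at this

theorem lintegral_mul_sq_sub_le {f ρ g : ℝ → ℝ} {m α : ℝ} (hα : 0 < α)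
    (hf : ∀ x, HasDerivAt f (-ρ x) x) (hf₀ : ∀ x, 0 ≤ f x) (hint : Integrable f)
    (hρf : ∀ x, (x - m) ^ 2 * f x ≤ α * ((x - m) * ρ x)) (hg : ContDiff ℝ 1 g) :
    ∫⁻ x, ENNReal.ofReal (f x * (g x - g m) ^ 2)
      ≤ ENNReal.ofReal α * ∫⁻ x, ENNReal.ofReal (f x * deriv g x ^ 2) := by
  have right := lintegral_Ioi_mul_sq_sub_le hα hf hf₀ hint.integrableOn
    (fun x hx => le_of_mul_le_mul_left (by nlinarith [hρf x]) (sub_pos.2 hx)) hg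
  -- the half-line left of `m` is the right one for `f (-x)`, `g (-x)` and `-m`
  have left := lintegral_Ioi_mul_sq_sub_le (f := fun x => f (-x)) (ρ := fun x => -ρ (-x))
    (g := fun x => g (-x)) (m := -m) hα
    (fun x => by simpa [Function.comp_def] using (hf (-x)).comp x (hasDerivAt_neg x))
    (fun x => hf₀ (-x)) hint.comp_neg.integrableOn
    (fun x hx => le_of_mul_le_mul_left (by nlinarith [hρf (-x)]) (sub_pos.2 hx))
    (hg.comp contDiff_neg)
  simp only [deriv_comp_neg, neg_neg, neg_sq] at left
  rw [setLIntegral_Ioi_comp_neg (fun x => ENNReal.ofReal (f x * (g x - g m) ^ 2)),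
    setLIntegral_Ioi_comp_neg (fun x => ENNReal.ofReal (f x * deriv g x ^ 2))] at left
  rw [← lintegral_add_compl (fun x => ENNReal.ofReal (f x * (g x - g m) ^ 2)) measurableSet_Ioi,
    ← lintegral_add_compl (fun x => ENNReal.ofReal (f x * deriv g x ^ 2)) measurableSet_Ioi,
    compl_Ioi, setLIntegral_congr Iio_ae_eq_Iic.symm, setLIntegral_congr Iio_ae_eq_Iic.symm,
    mul_add]
  exact add_le_add right left

theorem mul_sq_sub_le_of_le_deriv {ψ : ℝ → ℝ} (hψ : Differentiable ℝ ψ) {c : ℝ}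
    (h : ∀ x, c ≤ deriv ψ x) (x y : ℝ) : c * (y - x) ^ 2 ≤ (y - x) * (ψ y - ψ x) := by
  rcases le_total x y with hxy | hyx
  · nlinarith [mul_sub_le_image_sub_of_le_deriv hψ h hxy]
  · nlinarith [mul_sub_le_image_sub_of_le_deriv hψ h hyx]

theorem exists_eq_zero_of_le_deriv {ψ : ℝ → ℝ} (hψ : Differentiable ℝ ψ) {c : ℝ}
    (hc : 0 < c) (h : ∀ x, c ≤ deriv ψ x) : ∃ m, ψ m = 0 := by
  refine hψ.continuous.surjective ?_ ?_ 0
  · refine tendsto_atTop_mono' _ ?_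
      ((tendsto_id.const_mul_atTop hc).atTop_add (tendsto_const_nhds (x := ψ 0)))
    filter_upwards [eventually_ge_atTop 0] with x hx
    simp only [id]
    linarith [mul_sub_le_image_sub_of_le_deriv hψ h hx]
  · refine tendsto_atBot_mono' _ ?_
      ((tendsto_id.const_mul_atBot hc).atBot_add (tendsto_const_nhds (x := ψ 0)))
    filter_upwards [eventually_le_atBot 0] with x hx
    simp only [id]
    linarith [mul_sub_le_image_sub_of_le_deriv hψ h hx]

theorem hasDerivAt_of_deriv_neg_log {f : ℝ → ℝ} {x : ℝ} (hf : DifferentiableAt ℝ f x)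
    (hx : f x ≠ 0) : HasDerivAt f (-(deriv (fun y => -Real.log (f y)) x * f x)) x := by
  rw [(hf.hasDerivAt.log hx).fun_neg.deriv, neg_mul, neg_neg, div_mul_cancel₀ _ hx]
  exact hf.hasDerivAt

theorem exists_lintegral_mul_sq_sub_le {f g : ℝ → ℝ} {α : ℝ} (hf : ContDiff ℝ 2 f)
    (hfpos : ∀ x, 0 < f x) (hint : Integrable f) (hα : 0 < α)
    (hslc : ∀ x, 1 / α ≤ deriv (deriv fun y => -Real.log (f y)) x) (hg : ContDiff ℝ 1 g) :
    ∃ m, ∫⁻ x, ENNReal.ofReal (f x * (g x - g m) ^ 2)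
      ≤ ENNReal.ofReal α * ∫⁻ x, ENNReal.ofReal (f x * deriv g x ^ 2) := by
  set ψ := deriv fun y => -Real.log (f y)
  have hψ : Differentiable ℝ ψ :=
    ((hf.log fun x => (hfpos x).ne').neg.deriv' (n := 1)).differentiable one_ne_zero
  obtain ⟨m, hm⟩ := exists_eq_zero_of_le_deriv hψ (one_div_pos.2 hα) hslc
  refine ⟨m, lintegral_mul_sq_sub_le (ρ := fun x => ψ x * f x) hα
    (fun x => hasDerivAt_of_deriv_neg_log (hf.differentiable two_ne_zero x) (hfpos x).ne')
    (fun x => (hfpos x).le) hint (fun x => ?_) hg⟩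
  have hsq := mul_sq_sub_le_of_le_deriv hψ hslc m x
  rw [hm, sub_zero, one_div_mul_eq_div, div_le_iff₀ hα] at hsq
  nlinarith [hfpos x]

theorem lintegral_withDensity_ofReal {Ω : Type*} [MeasurableSpace Ω] {μ : Measure Ω}
    {f h : Ω → ℝ} (hf : Measurable f) (hf₀ : ∀ x, 0 ≤ f x) :
    ∫⁻ x, ENNReal.ofReal (h x) ∂μ.withDensity (fun x => ENNReal.ofReal (f x))
      = ∫⁻ x, ENNReal.ofReal (f x * h x) ∂μ := by
  rw [lintegral_withDensity_eq_lintegral_mul_non_measurable _ hf.ennreal_ofReal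
    (.of_forall fun _ => ENNReal.ofReal_lt_top)]
  simp only [Pi.mul_apply, ENNReal.ofReal_mul (hf₀ _)]

theorem variance_le_mul_integral_of_lintegral_le {Ω : Type*} [MeasurableSpace Ω]
    {μ : Measure Ω} [IsProbabilityMeasure μ] {X Y : Ω → ℝ} {α c : ℝ}
    (hX : AEStronglyMeasurable X μ) (hY : Integrable Y μ) (hY₀ : ∀ ω, 0 ≤ Y ω)
    (hα : 0 ≤ α)
    (h : ∫⁻ ω, ENNReal.ofReal ((X ω - c) ^ 2) ∂μ
      ≤ ENNReal.ofReal α * ∫⁻ ω, ENNReal.ofReal (Y ω) ∂μ) :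
    Var[X; μ] ≤ α * ∫ ω, Y ω ∂μ := by
  have hXc : AEStronglyMeasurable (fun ω => X ω - c) μ := hX.sub aestronglyMeasurable_const
  have hY' : ∫⁻ ω, ENNReal.ofReal (Y ω) ∂μ ≠ ∞ :=
    ((hasFiniteIntegral_iff_ofReal (.of_forall hY₀)).1 hY.2).ne
  calc Var[X; μ] = Var[fun ω => X ω - c; μ] := (variance_sub_const hX c).symm
    _ ≤ μ[(fun ω => X ω - c) ^ 2] := variance_le_expectation_sq hXc
    _ = (∫⁻ ω, ENNReal.ofReal ((X ω - c) ^ 2) ∂μ).toReal :=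
        integral_eq_lintegral_of_nonneg_ae (.of_forall fun _ => sq_nonneg _) (hXc.pow 2)
    _ ≤ (ENNReal.ofReal α * ∫⁻ ω, ENNReal.ofReal (Y ω) ∂μ).toReal :=
        ENNReal.toReal_mono (ENNReal.mul_ne_top ENNReal.ofReal_ne_top hY') h
    _ = α * ∫ ω, Y ω ∂μ := by
        rw [ENNReal.toReal_mul, ENNReal.toReal_ofReal hα,
          integral_eq_lintegral_of_nonneg_ae (.of_forall hY₀) hY.1]

theorem brascamp_lieb_one_dim_general
    (f : ℝ → ℝ) (hf : ContDiff ℝ 2 f) (hfpos : ∀ x, 0 < f x)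
    (α : ℝ) (hα : 0 < α)
    (hslc : ∀ x, 1 / α ≤ deriv (deriv fun y => -Real.log (f y)) x)
    (hprob : IsProbabilityMeasure (volume.withDensity fun x => ENNReal.ofReal (f x)))
    (g : ℝ → ℝ) (hg : ContDiff ℝ 1 g)
    (hg' : Integrable (fun x => (deriv g x) ^ 2)
      (volume.withDensity fun x => ENNReal.ofReal (f x))) :
    ProbabilityTheory.variance g (volume.withDensity fun x => ENNReal.ofReal (f x))
      ≤ α * ∫ x, (deriv g x) ^ 2 ∂(volume.withDensity fun x => ENNReal.ofReal (f x)) := by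
  have hf₀ : ∀ x, 0 ≤ f x := fun x => (hfpos x).le
  have hint : Integrable f := by
    refine ⟨hf.continuous.aestronglyMeasurable,
      (hasFiniteIntegral_iff_ofReal (.of_forall hf₀)).2 ?_⟩
    rw [← setLIntegral_univ, ← withDensity_apply _ MeasurableSet.univ]
    exact measure_lt_top _ _
  obtain ⟨m, hm⟩ := exists_lintegral_mul_sq_sub_le hf hfpos hint hα hslc hg
  refine variance_le_mul_integral_of_lintegral_le (c := g m)
    hg.continuous.aestronglyMeasurable hg' (fun _ => sq_nonneg _) hα.le ?_
  rwa [lintegral_withDensity_ofReal hf.continuous.measurable hf₀,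
    lintegral_withDensity_ofReal hf.continuous.measurable hf₀]

/-- One-dimensional Brascamp–Lieb inequality under strong log-concavity: if `f` is a twice
continuously differentiable probability density with potential `φ = -log f` strictly convex
and `φ'' ≥ 1/α`, then for every `C¹` function `g` (square-integrable, with integrable
`g'²`) we have `Var(g(X)) ≤ α · E[g'(X)²]` where `X` has density `f`. -/
theorem brascamp_lieb_one_dim
    (f : ℝ → ℝ) (hf : ContDiff ℝ 2 f) (hfpos : ∀ x, 0 < f x)
    (α : ℝ) (hα : 0 < α)
    (hconv : ∀ x, 0 < deriv (deriv fun y => -Real.log (f y)) x)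
    (hslc : ∀ x, 1 / α ≤ deriv (deriv fun y => -Real.log (f y)) x)
    (hprob : IsProbabilityMeasure (volume.withDensity fun x => ENNReal.ofReal (f x)))
    (g : ℝ → ℝ) (hg : ContDiff ℝ 1 g)
    (hg2 : MemLp g 2 (volume.withDensity fun x => ENNReal.ofReal (f x)))
    (hg' : Integrable (fun x => (deriv g x) ^ 2)
      (volume.withDensity fun x => ENNReal.ofReal (f x))) :
    ProbabilityTheory.variance g (volume.withDensity fun x => ENNReal.ofReal (f x))
      ≤ α * ∫ x, (deriv g x) ^ 2 ∂(volume.withDensity fun x => ENNReal.ofReal (f x)) :=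
  brascamp_lieb_one_dim_general f hf hfpos α hα hslc hprob g hg hg'
end

section
/- Let X be a real random variable with density f ∈ SLC(α) for some α > 0. Then Var(X) ≤ α, with equality if and only if X is Gaussian with variance α. -/
/-!
Let `h(x) = ∫_{t > x} (t - μ) f(t) dt` (`centeredTail f μ`; `h = τ f` for the Stein kernel `τ`).
Integrating `x - μ` by parts against `h' = -(x - μ) f` gives `Var X = ∫ h`. The function
`u = α f - h` has derivative `α f' + (x - μ) f = f · (α (f'/f + x/α) - μ)`, which by the SLC(α)
condition changes sign at most once, from `+` to `-`; since `u ≥ -h → 0` at `±∞`, this forces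
`u ≥ 0`. Hence `Var X = α - ∫ u ≤ α`, with equality iff `u = 0`, i.e. iff `α f' = -(x - μ) f`,
whose only probability density solution is the Gaussian with mean `μ` and variance `α`.
-/

open MeasureTheory Filter Set Topology ProbabilityTheory
open scoped NNReal

section TailIntegral

variable {G : ℝ → ℝ}

theorem integral_Ioi_eq_sub_intervalIntegral (hG : Integrable G) (b : ℝ) :
    ∫ t in Ioi b, G t = (∫ t in Ioi 0, G t) - ∫ t in 0..b, G t := by
  have hb := intervalIntegral.integral_Iic_add_Ioi (b := b) hG.integrableOn hG.integrableOn
  have h0 := intervalIntegral.integral_Iic_add_Ioi (b := 0) hG.integrableOn hG.integrableOn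
  have h0b := intervalIntegral.integral_Iic_sub_Iic (a := 0) (b := b)
    hG.integrableOn hG.integrableOn
  linarith

theorem hasDerivAt_integral_Ioi (hGc : Continuous G) (hG : Integrable G) (x : ℝ) :
    HasDerivAt (fun b => ∫ t in Ioi b, G t) (-G x) x := by
  have hd := intervalIntegral.integral_hasDerivAt_right (a := 0) (b := x) hG.intervalIntegrable
    hGc.stronglyMeasurable.stronglyMeasurableAtFilter hGc.continuousAt
  exact (hd.const_sub _).congr_of_eventuallyEq
    (Eventually.of_forall (integral_Ioi_eq_sub_intervalIntegral hG))

theorem tendsto_integral_Ioi_atTop (hG : Integrable G) :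
    Tendsto (fun b => ∫ t in Ioi b, G t) atTop (𝓝 0) := by
  have h := intervalIntegral_tendsto_integral_Ioi 0 hG.integrableOn tendsto_id
  rw [← sub_self (∫ t in Ioi (0 : ℝ), G t)]
  exact (tendsto_const_nhds.sub h).congr fun b => (integral_Ioi_eq_sub_intervalIntegral hG b).symm

theorem tendsto_integral_Iic_atBot (hG : Integrable G) :
    Tendsto (fun b => ∫ t in Iic b, G t) atBot (𝓝 0) := by
  have h := intervalIntegral_tendsto_integral_Iic 0 hG.integrableOn tendsto_id
  rw [← sub_self (∫ t in Iic (0 : ℝ), G t)]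
  refine (tendsto_const_nhds.sub h).congr fun b => ?_
  rw [← intervalIntegral.integral_Iic_sub_Iic hG.integrableOn hG.integrableOn, sub_sub_cancel, id]

theorem integral_Ioi_eq_neg_integral_Iic (hG : Integrable G) (hG0 : ∫ t, G t = 0) (x : ℝ) :
    ∫ t in Ioi x, G t = -∫ t in Iic x, G t := by
  have := intervalIntegral.integral_Iic_add_Ioi (b := x) hG.integrableOn hG.integrableOn
  linarith

end TailIntegral

theorem hasDerivAt_gaussianPDFReal (μ : ℝ) (v : ℝ≥0) (x : ℝ) :
    HasDerivAt (gaussianPDFReal μ v) (-(x - μ) / v * gaussianPDFReal μ v x) x := by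
  have hq : HasDerivAt (fun x : ℝ => -(x - μ) ^ 2 / (2 * v)) (-(x - μ) / v) x := by
    refine ((((hasDerivAt_id' x).sub_const μ).fun_pow 2).fun_neg.div_const
      (2 * (v : ℝ))).congr_deriv ?_
    norm_num
    ring
  rw [gaussianPDFReal_def]
  exact (hq.exp.const_mul (√(2 * Real.pi * v))⁻¹).congr_deriv (by ring)

theorem eq_gaussianPDFReal_of_hasDerivAt {f : ℝ → ℝ} {μ : ℝ} {v : ℝ≥0} (hv : v ≠ 0)
    (hf : ∀ x, HasDerivAt f (-(x - μ) / v * f x) x) (hf1 : ∫ x, f x = 1) :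
    f = gaussianPDFReal μ v := by
  have hg := hasDerivAt_gaussianPDFReal μ v
  have hg0 x : gaussianPDFReal μ v x ≠ 0 := (gaussianPDFReal_pos μ v x hv).ne'
  have hratio x : HasDerivAt (fun x => f x / gaussianPDFReal μ v x) 0 x :=
    ((hf x).div (hg x) (hg0 x)).congr_deriv (by ring)
  have hfc : f = fun x => f μ / gaussianPDFReal μ v μ * gaussianPDFReal μ v x := by
    funext x
    rw [← is_const_of_deriv_eq_zero (fun x => (hratio x).differentiableAt)
      (fun x => (hratio x).deriv) x μ, div_mul_cancel₀ _ (hg0 x)]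
  have hc : f μ / gaussianPDFReal μ v μ = 1 := by
    rwa [hfc, integral_const_mul, integral_gaussianPDFReal_eq_one μ hv, mul_one] at hf1
  simpa [hc] using hfc

theorem forall_mul_deriv_add_eq_zero_iff_eq_gaussianPDFReal {f : ℝ → ℝ} {μ : ℝ} {v : ℝ≥0}
    (hv : v ≠ 0) (hf : Differentiable ℝ f) (hf1 : ∫ x, f x = 1) :
    (∀ x, v * deriv f x + (x - μ) * f x = 0) ↔ f = gaussianPDFReal μ v := by
  have hv' : (v : ℝ) ≠ 0 := NNReal.coe_ne_zero.mpr hv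
  constructor
  · intro hode
    refine eq_gaussianPDFReal_of_hasDerivAt hv (fun x => ?_) hf1
    have hderiv : deriv f x = -(x - μ) / v * f x := by
      field_simp
      linarith [hode x]
    exact hderiv ▸ (hf x).hasDerivAt
  · rintro rfl x
    rw [(hasDerivAt_gaussianPDFReal μ v x).deriv]
    field_simp
    ring

section Centering

variable {f : ℝ → ℝ}

theorem integrable_sub_mul (hf : Integrable f) (hxf : Integrable fun x => x * f x) (μ : ℝ) :
    Integrable fun t => (t - μ) * f t :=
  (hxf.sub (hf.const_mul μ)).congr (ae_of_all _ fun t => by simp only [Pi.sub_apply]; ring)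

theorem integral_sub_mul_eq_zero {μ : ℝ} (hf : Integrable f) (hxf : Integrable fun x => x * f x)
    (hf1 : ∫ x, f x = 1) (hmean : ∫ x, x * f x = μ) : ∫ t, (t - μ) * f t = 0 := by
  simp only [sub_mul]
  rw [integral_sub hxf (hf.const_mul μ), integral_const_mul, hmean, hf1, mul_one, sub_self]

end Centering

noncomputable def centeredTail (f : ℝ → ℝ) (μ x : ℝ) : ℝ :=
  ∫ t in Ioi x, (t - μ) * f t

section CenteredTail

variable {f : ℝ → ℝ} {μ : ℝ}

theorem hasDerivAt_centeredTail (hf : Continuous f) (hG : Integrable fun t => (t - μ) * f t)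
    (x : ℝ) : HasDerivAt (centeredTail f μ) (-((x - μ) * f x)) x :=
  hasDerivAt_integral_Ioi (by fun_prop) hG x

theorem continuous_centeredTail (hf : Continuous f) (hG : Integrable fun t => (t - μ) * f t) :
    Continuous (centeredTail f μ) :=
  continuous_iff_continuousAt.2 fun x => (hasDerivAt_centeredTail hf hG x).continuousAt

theorem centeredTail_nonneg (hf0 : ∀ x, 0 ≤ f x) (hG : Integrable fun t => (t - μ) * f t)
    (hG0 : ∫ t, (t - μ) * f t = 0) (x : ℝ) : 0 ≤ centeredTail f μ x := by
  rcases le_total μ x with hx | hx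
  · refine setIntegral_nonneg measurableSet_Ioi fun t ht => ?_
    exact mul_nonneg (by linarith [mem_Ioi.mp ht]) (hf0 t)
  · rw [centeredTail, integral_Ioi_eq_neg_integral_Iic hG hG0, neg_nonneg]
    refine setIntegral_nonpos measurableSet_Iic fun t ht => ?_
    exact mul_nonpos_of_nonpos_of_nonneg (by linarith [mem_Iic.mp ht]) (hf0 t)

theorem integrable_centeredTail_of_le (hf : Continuous f) (hf0 : ∀ x, 0 ≤ f x)
    (hG : Integrable fun t => (t - μ) * f t) (hG0 : ∫ t, (t - μ) * f t = 0) {C : ℝ}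
    (hfi : Integrable f) (hle : ∀ x, centeredTail f μ x ≤ C * f x) :
    Integrable (centeredTail f μ) :=
  (hfi.const_mul C).mono' (continuous_centeredTail hf hG).aestronglyMeasurable <|
    ae_of_all _ fun x => by
      rw [Real.norm_eq_abs, abs_of_nonneg (centeredTail_nonneg hf0 hG hG0 x)]
      exact hle x

theorem tendsto_sub_mul_centeredTail_atTop (hf0 : ∀ x, 0 ≤ f x)
    (hG : Integrable fun t => (t - μ) * f t) (hvar : Integrable fun t => (t - μ) ^ 2 * f t) :
    Tendsto (fun b => (b - μ) * centeredTail f μ b) atTop (𝓝 0) := by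
  refine tendsto_of_tendsto_of_tendsto_of_le_of_le' tendsto_const_nhds
    (tendsto_integral_Ioi_atTop hvar) ?_ ?_
  · filter_upwards [eventually_ge_atTop μ] with b hb
    refine mul_nonneg (by linarith) (setIntegral_nonneg measurableSet_Ioi fun t ht => ?_)
    exact mul_nonneg (by linarith [mem_Ioi.mp ht]) (hf0 t)
  · filter_upwards [eventually_ge_atTop μ] with b hb
    rw [centeredTail, ← integral_const_mul]
    refine setIntegral_mono_on (hG.const_mul _).integrableOn hvar.integrableOn
      measurableSet_Ioi fun t ht => ?_
    have hbt : b - μ ≤ t - μ := by linarith [mem_Ioi.mp ht]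
    have hGt : 0 ≤ (t - μ) * f t := mul_nonneg (by linarith) (hf0 t)
    nlinarith [mul_le_mul_of_nonneg_right hbt hGt]

theorem tendsto_sub_mul_centeredTail_atBot (hf0 : ∀ x, 0 ≤ f x)
    (hG : Integrable fun t => (t - μ) * f t) (hG0 : ∫ t, (t - μ) * f t = 0)
    (hvar : Integrable fun t => (t - μ) ^ 2 * f t) :
    Tendsto (fun b => (b - μ) * centeredTail f μ b) atBot (𝓝 0) := by
  have hneg : ∀ b, (b - μ) * centeredTail f μ b = ∫ t in Iic b, (μ - b) * ((t - μ) * f t) := by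
    intro b
    rw [centeredTail, integral_Ioi_eq_neg_integral_Iic hG hG0, integral_const_mul]
    ring
  simp only [hneg]
  refine tendsto_of_tendsto_of_tendsto_of_le_of_le'
    (by simpa using (tendsto_integral_Iic_atBot hvar).neg) tendsto_const_nhds ?_ ?_
  · filter_upwards [eventually_le_atBot μ] with b hb
    rw [← integral_neg]
    refine setIntegral_mono_on hvar.integrableOn.neg (hG.const_mul _).integrableOn
      measurableSet_Iic fun t ht => ?_
    have htb : μ - b ≤ μ - t := by linarith [mem_Iic.mp ht]
    have hGt : 0 ≤ (μ - t) * f t := mul_nonneg (by linarith) (hf0 t)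
    nlinarith [mul_le_mul_of_nonneg_right htb hGt]
  · filter_upwards [eventually_le_atBot μ] with b hb
    refine setIntegral_nonpos measurableSet_Iic fun t ht => ?_
    exact mul_nonpos_of_nonneg_of_nonpos (by linarith)
      (mul_nonpos_of_nonpos_of_nonneg (by linarith [mem_Iic.mp ht]) (hf0 t))

theorem integral_centeredTail (hf : Continuous f) (hf0 : ∀ x, 0 ≤ f x)
    (hG : Integrable fun t => (t - μ) * f t) (hG0 : ∫ t, (t - μ) * f t = 0)
    (hvar : Integrable fun t => (t - μ) ^ 2 * f t) (hint : Integrable (centeredTail f μ)) :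
    ∫ x, centeredTail f μ x = ∫ x, (x - μ) ^ 2 * f x := by
  have huv' : Integrable ((fun x => x - μ) * fun x => -((x - μ) * f x)) := by
    convert hvar.neg using 1
    ext x
    simp only [Pi.mul_apply, Pi.neg_apply]
    ring
  have hibp := integral_mul_deriv_eq_deriv_mul (u' := fun _ => 1)
    (fun x _ => (hasDerivAt_id x).sub_const μ) (fun x _ => hasDerivAt_centeredTail hf hG x)
    huv' (by simpa [Pi.mul_def] using hint) (tendsto_sub_mul_centeredTail_atBot hf0 hG hG0 hvar)
    (tendsto_sub_mul_centeredTail_atTop hf0 hG hvar)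
  have hlhs : ∫ x, (x - μ) * -((x - μ) * f x) = -∫ x, (x - μ) ^ 2 * f x := by
    rw [← integral_neg]
    congr 1 with x
    ring
  simp only [id, one_mul, zero_sub, sub_zero, hlhs, neg_inj] at hibp
  exact hibp.symm

end CenteredTail

theorem monotoneOn_Iic_or_antitoneOn_Ici_of_hasDerivAt {u w φ : ℝ → ℝ}
    (hu : ∀ x, HasDerivAt u (w x * φ x) x) (hw : ∀ x, 0 ≤ w x) (hφ : Antitone φ) (a : ℝ) :
    MonotoneOn u (Iic a) ∨ AntitoneOn u (Ici a) := by
  have hcont : Continuous u := continuous_iff_continuousAt.2 fun x => (hu x).continuousAt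
  rcases le_total 0 (φ a) with ha | ha
  · left
    refine monotoneOn_of_hasDerivWithinAt_nonneg (convex_Iic a) hcont.continuousOn
      (fun x _ => (hu x).hasDerivWithinAt) fun x hx => ?_
    rw [interior_Iic] at hx
    exact mul_nonneg (hw x) (ha.trans (hφ hx.le))
  · right
    refine antitoneOn_of_hasDerivWithinAt_nonpos (convex_Ici a) hcont.continuousOn
      (fun x _ => (hu x).hasDerivWithinAt) fun x hx => ?_
    rw [interior_Ici] at hx
    exact mul_nonpos_of_nonneg_of_nonpos (hw x) ((hφ hx.le).trans ha)

theorem eq_zero_iff_of_integrable_of_hasDerivAt {u u' : ℝ → ℝ}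
    (hu : ∀ x, HasDerivAt u (u' x) x) (hi : Integrable u) : u = 0 ↔ u' = 0 := by
  constructor
  · rintro rfl
    funext x
    exact (hu x).unique (hasDerivAt_const x 0)
  · intro hu'
    have hconst : u = fun _ => u 0 := funext fun x =>
      is_const_of_deriv_eq_zero (fun x => (hu x).differentiableAt)
        (fun x => by rw [(hu x).deriv, hu', Pi.zero_apply]) x 0
    rw [hconst, integrable_const_iff, not_isFiniteMeasure_iff.2 Real.volume_univ |> or_iff_left]
      at hi
    rw [hconst, hi]
    rfl

section SLC

variable {f : ℝ → ℝ} {α μ : ℝ}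

theorem hasDerivAt_mul_sub_centeredTail (hf : Differentiable ℝ f)
    (hG : Integrable fun t => (t - μ) * f t) (x : ℝ) :
    HasDerivAt (fun x => α * f x - centeredTail f μ x) (α * deriv f x + (x - μ) * f x) x :=
  (((hf x).hasDerivAt.const_mul α).sub (hasDerivAt_centeredTail hf.continuous hG x)).congr_deriv
    (by ring)

theorem centeredTail_le_of_slc (hf : Differentiable ℝ f) (hfpos : ∀ x, 0 < f x) (hα : 0 < α)
    (hslc : Antitone fun x => deriv f x / f x + x / α)
    (hG : Integrable fun t => (t - μ) * f t) (hG0 : ∫ t, (t - μ) * f t = 0) (x : ℝ) :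
    centeredTail f μ x ≤ α * f x := by
  set u := fun x => α * f x - centeredTail f μ x
  have hu x : HasDerivAt u (f x * (α * (deriv f x / f x + x / α) - μ)) x :=
    (hasDerivAt_mul_sub_centeredTail hf hG x).congr_deriv (by field_simp [(hfpos x).ne']; ring)
  have hφ : Antitone fun x => α * (deriv f x / f x + x / α) - μ := fun a b hab =>
    sub_le_sub_right (mul_le_mul_of_nonneg_left (hslc hab) hα.le) μ
  have hlow y : -centeredTail f μ y ≤ u y := by
    simp only [u]
    nlinarith [hfpos y]
  suffices 0 ≤ u x by simpa [u] using this
  rcases monotoneOn_Iic_or_antitoneOn_Ici_of_hasDerivAt hu (fun y => (hfpos y).le) hφ x with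
    hmono | hanti
  · have hbot : Tendsto (fun y => -centeredTail f μ y) atBot (𝓝 0) := by
      simpa [centeredTail, integral_Ioi_eq_neg_integral_Iic hG hG0] using
        tendsto_integral_Iic_atBot hG
    refine le_of_tendsto hbot ?_
    filter_upwards [eventually_le_atBot x] with y hy
    exact (hlow y).trans (hmono hy (mem_Iic.2 le_rfl) hy)
  · have htop : Tendsto (fun y => -centeredTail f μ y) atTop (𝓝 0) := by
      simpa [centeredTail] using (tendsto_integral_Ioi_atTop hG).neg
    refine le_of_tendsto htop ?_
    filter_upwards [eventually_ge_atTop x] with y hy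
    exact (hlow y).trans (hanti (mem_Ici.2 le_rfl) hy hy)

end SLC

/-- For a real random variable with density `f ∈ SLC(α)`, `Var(X) ≤ α`, with equality if
and only if `X` is Gaussian with variance `α`. -/
theorem slc_variance_le
    (f : ℝ → ℝ) (hf : Differentiable ℝ f) (hfpos : ∀ x, 0 < f x)
    (α : ℝ) (hα : 0 < α)
    (hslc : Antitone fun x => deriv f x / f x + x / α)
    (hprob : ∫ x, f x = 1)
    (μ : ℝ) (hmeanInt : Integrable fun x => x * f x) (hmean : ∫ x, x * f x = μ)
    (hvarInt : Integrable fun x => (x - μ) ^ 2 * f x) :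
    (∫ x, (x - μ) ^ 2 * f x) ≤ α ∧
      ((∫ x, (x - μ) ^ 2 * f x) = α ↔
        ∀ x, f x = (Real.sqrt (2 * Real.pi * α))⁻¹ * Real.exp (-(x - μ) ^ 2 / (2 * α))) := by
  have hfInt : Integrable f := Integrable.of_integral_ne_zero (hprob ▸ one_ne_zero)
  have hG := integrable_sub_mul hfInt hmeanInt μ
  have hG0 := integral_sub_mul_eq_zero hfInt hmeanInt hprob hmean
  have hle := centeredTail_le_of_slc hf hfpos hα hslc hG hG0
  have hint : Integrable (centeredTail f μ) :=
    integrable_centeredTail_of_le hf.continuous (fun x => (hfpos x).le) hG hG0 hfInt hle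
  set u := fun x => α * f x - centeredTail f μ x
  have hu : ∀ x, HasDerivAt u (α * deriv f x + (x - μ) * f x) x :=
    hasDerivAt_mul_sub_centeredTail hf hG
  have huc : Continuous u := continuous_iff_continuousAt.2 fun x => (hu x).continuousAt
  have hu0 : 0 ≤ u := fun x => sub_nonneg.2 (hle x)
  have huInt : Integrable u := (hfInt.const_mul α).sub hint
  have hvar : ∫ x, (x - μ) ^ 2 * f x = α - ∫ x, u x := by
    rw [← integral_centeredTail hf.continuous (fun x => (hfpos x).le) hG hG0 hvarInt hint,
      integral_sub (hfInt.const_mul α) hint, integral_const_mul, hprob]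
    ring
  refine ⟨by linarith [(integral_nonneg hu0 : 0 ≤ ∫ x, u x)], ?_⟩
  have hv : (⟨α, hα.le⟩ : ℝ≥0) ≠ 0 := ne_of_gt hα
  rw [hvar, sub_eq_self, integral_eq_zero_iff_of_nonneg hu0 huInt,
    huc.ae_eq_iff_eq volume continuous_zero, eq_zero_iff_of_integrable_of_hasDerivAt hu huInt,
    funext_iff]
  exact (forall_mul_deriv_add_eq_zero_iff_eq_gaussianPDFReal hv hf hprob).trans funext_iff
end

section
/- Let X be a real random variable with mean μ and density f ∈ SLC(α). Then for every integer r ≥ 1, the centred moments satisfy M_{2r}(X) ≤ α(2r−1)·M_{2r−2}(X), where M_k(X) = E[(X−μ)^k]. -/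
open MeasureTheory Set Filter

/-!
Put `w x = f' x / f x + (x - μ) / α`, which is antitone, so that `f' = f * (w - (x - μ) / α)`.
The derivative of `(x - μ) ^ k * f` integrates to zero over the line, which reads
`E[(X - μ) ^ k w(X)] = M_{k+1} / α - k M_{k-1}`.
For `k = 0` this gives `E[w(X)] = 0`; for odd `k` the weight `(x - μ) ^ k` is increasing while `w`
is decreasing, so Chebyshev's integral inequality gives `E[(X - μ) ^ k w(X)] ≤ M_k E[w(X)] = 0`,
which is the claim for `k = 2r - 1`.

The delicate point is the integrability of `(x - μ) ^ k w f`. For odd `k` the product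
`(x - μ) ^ k (w x - w μ)` is nonpositive, so the derivative of `(x - μ) ^ k f` is bounded above by
an integrable function; as `(x - μ) ^ k f` is larger at `μ + t` than at `μ - t`, monotone
convergence makes that derivative integrable.
-/

theorem Antivary.integral_mul_mul_le {Ω : Type*} [MeasurableSpace Ω] {μ : Measure Ω}
    {u w ρ : Ω → ℝ} (huw : Antivary u w) (hρ : ∀ x, 0 ≤ ρ x) (hρ1 : ∫ x, ρ x ∂μ = 1)
    (hui : Integrable (fun x => u x * ρ x) μ) (hwi : Integrable (fun x => w x * ρ x) μ)
    (huwi : Integrable (fun x => u x * w x * ρ x) μ) :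
    ∫ x, u x * w x * ρ x ∂μ ≤ (∫ x, u x * ρ x ∂μ) * ∫ x, w x * ρ x ∂μ := by
  set U := ∫ x, u x * ρ x ∂μ
  set W := ∫ x, w x * ρ x ∂μ
  set A := ∫ x, u x * w x * ρ x ∂μ
  have hρi : Integrable ρ μ := Integrable.of_integral_ne_zero (by simp [hρ1])
  have hslice (x : Ω) : (A - w x * U - u x * W + u x * w x) * ρ x ≤ 0 := by
    have h : ∫ y, (u y - u x) * (w y - w x) * ρ y ∂μ ≤ 0 :=
      integral_nonpos fun y =>
        mul_nonpos_of_nonpos_of_nonneg (huw.sub_mul_sub_nonpos x y) (hρ y)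
    have expand :
        ∫ y, (u y - u x) * (w y - w x) * ρ y ∂μ = A - w x * U - u x * W + u x * w x := by
      have : (fun y => (u y - u x) * (w y - w x) * ρ y) =
          fun y => u y * w y * ρ y - w x * (u y * ρ y) - u x * (w y * ρ y) + u x * w x * ρ y := by
        ext y; ring
      rw [this, integral_add, integral_sub, integral_sub, integral_const_mul, integral_const_mul,
        integral_const_mul, hρ1, mul_one]
      exacts [huwi, hui.const_mul _, huwi.sub (hui.const_mul _), hwi.const_mul _,
        (huwi.sub (hui.const_mul _)).sub (hwi.const_mul _), hρi.const_mul _]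
    exact mul_nonpos_of_nonpos_of_nonneg (expand ▸ h) (hρ x)
  have htotal := integral_nonpos (μ := μ) hslice
  have : (fun x => (A - w x * U - u x * W + u x * w x) * ρ x) =
      fun x => A * ρ x - U * (w x * ρ x) - W * (u x * ρ x) + u x * w x * ρ x := by
    ext x; ring
  rw [this, integral_add, integral_sub, integral_sub, integral_const_mul, integral_const_mul,
    integral_const_mul, hρ1] at htotal
  · linarith
  exacts [hρi.const_mul _, hwi.const_mul _, (hρi.const_mul _).sub (hwi.const_mul _),
    hui.const_mul _, ((hρi.const_mul _).sub (hwi.const_mul _)).sub (hui.const_mul _), huwi]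

theorem integrable_deriv_of_nonneg_of_sub_le {G G' : ℝ → ℝ} {c C : ℝ}
    (hG : ∀ x, HasDerivAt G (G' x) x) (hG' : ∀ x, 0 ≤ G' x)
    (hC : ∀ t, 0 ≤ t → G (c + t) - G (c - t) ≤ C) : Integrable G' := by
  have hint (a b : ℝ) : IntegrableOn G' (Ioc a b) :=
    intervalIntegral.integrableOn_deriv_of_nonneg
      (fun x _ => (hG x).continuousAt.continuousWithinAt) (fun x _ => hG x) fun x _ => hG' x
  have hbot : Tendsto (fun t : ℝ => c - t) atTop atBot := by
    simpa only [← sub_eq_add_neg] using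
      tendsto_atBot_add_const_left atTop c tendsto_neg_atTop_atBot
  refine integrable_of_intervalIntegral_norm_bounded C (fun t => hint _ _) hbot
    (tendsto_atTop_add_const_left atTop c tendsto_id) ?_
  filter_upwards [eventually_ge_atTop 0] with t ht
  have hle : c - t ≤ c + t := by linarith
  calc ∫ x in c - t..c + id t, ‖G' x‖ = ∫ x in c - t..c + t, G' x :=
        intervalIntegral.integral_congr fun x _ => Real.norm_of_nonneg (hG' x)
    _ = G (c + t) - G (c - t) :=
        intervalIntegral.integral_eq_sub_of_hasDerivAt (fun x _ => hG x)
          ((intervalIntegrable_iff_integrableOn_Ioc_of_le hle).2 (hint _ _))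
    _ ≤ C := hC t ht

theorem integrable_deriv_of_le {F F' E : ℝ → ℝ} {c : ℝ} (hF : ∀ x, HasDerivAt F (F' x) x)
    (hE : Continuous E) (hEi : Integrable E) (hle : ∀ x, F' x ≤ E x)
    (hFc : ∀ t, 0 ≤ t → F (c - t) ≤ F (c + t)) : Integrable F' := by
  have hG (x : ℝ) : HasDerivAt (fun x => (∫ t in c..x, E t) - F x) (E x - F' x) x :=
    (hE.integral_hasStrictDerivAt c x).hasDerivAt.sub (hF x)
  have hbound (t : ℝ) (ht : 0 ≤ t) :
      ((∫ s in c..c + t, E s) - F (c + t)) - ((∫ s in c..c - t, E s) - F (c - t)) ≤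
        ∫ s, |E s| := by
    have hE_le : ∫ s in c - t..c + t, E s ≤ ∫ s, |E s| := by
      rw [intervalIntegral.integral_of_le (by linarith)]
      exact (le_abs_self _).trans (abs_integral_le_integral_abs.trans
        (setIntegral_le_integral hEi.abs (Eventually.of_forall fun s => abs_nonneg _)))
    rw [← intervalIntegral.integral_interval_sub_left (a := c) hEi.intervalIntegrable
      hEi.intervalIntegrable] at hE_le
    linarith [hFc t ht]
  have hEF := integrable_deriv_of_nonneg_of_sub_le hG (fun x => sub_nonneg.2 (hle x)) hbound
  exact (hEi.sub hEF).congr (Eventually.of_forall fun x => by simp)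

section StronglyLogConcave

variable {f w : ℝ → ℝ} {α c : ℝ}

theorem Odd.antivary_sub_pow {k : ℕ} (hk : Odd k) (hw : Antitone w) :
    Antivary (fun x => (x - c) ^ k) w :=
  Monotone.antivary (fun _ _ hab => hk.strictMono_pow.monotone (sub_le_sub_right hab c)) hw

theorem hasDerivAt_sub_pow_mul (hf : ∀ x, HasDerivAt f (f x * (w x - (x - c) / α)) x)
    (k : ℕ) (x : ℝ) :
    HasDerivAt (fun x => (x - c) ^ k * f x)
      (k * ((x - c) ^ (k - 1) * f x) + (x - c) ^ k * w x * f x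
        - (x - c) ^ (k + 1) * f x / α) x :=
  (((hasDerivAt_pow k (x - c)).comp_sub_const x c).mul (hf x)).congr_deriv (by ring)

theorem integrable_sub_pow_mul_mul_of_odd (hf : ∀ x, HasDerivAt f (f x * (w x - (x - c) / α)) x)
    (hf0 : ∀ x, 0 ≤ f x) (hw : Antitone w)
    (hmom : ∀ n : ℕ, Integrable fun x => (x - c) ^ n * f x) {k : ℕ} (hk : Odd k) :
    Integrable fun x => (x - c) ^ k * w x * f x := by
  have hfc : Continuous f := continuous_iff_continuousAt.2 fun x => (hf x).continuousAt
  have hF' := integrable_deriv_of_le (c := c) (hasDerivAt_sub_pow_mul hf k)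
    (E := fun x => k * ((x - c) ^ (k - 1) * f x) + w c * ((x - c) ^ k * f x)
      - (x - c) ^ (k + 1) * f x / α)
    (by fun_prop) ((((hmom _).const_mul _).add ((hmom _).const_mul _)).sub ((hmom _).div_const _))
    (fun x => ?_) (fun t ht => ?_)
  · exact ((hF'.sub ((hmom (k - 1)).const_mul (k : ℝ))).add ((hmom (k + 1)).div_const α)).congr
      (Eventually.of_forall fun x => by simp only [Pi.add_apply, Pi.sub_apply]; ring)
  · have := mul_nonpos_of_nonpos_of_nonneg
      ((hk.antivary_sub_pow (c := c) hw).sub_mul_sub_nonpos c x) (hf0 x)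
    simp only [sub_self, zero_pow hk.pos.ne', sub_zero] at this
    linarith
  · simp only [sub_sub_cancel_left, add_sub_cancel_left, hk.neg_pow]
    have := pow_nonneg ht k
    nlinarith [hf0 (c - t), hf0 (c + t)]

theorem integrable_mul_of_antitone (hf : ∀ x, HasDerivAt f (f x * (w x - (x - c) / α)) x)
    (hf0 : ∀ x, 0 ≤ f x) (hw : Antitone w)
    (hmom : ∀ n : ℕ, Integrable fun x => (x - c) ^ n * f x) :
    Integrable fun x => w x * f x := by
  have hfc : Continuous f := continuous_iff_continuousAt.2 fun x => (hf x).continuousAt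
  set K := |w (c + 1)| + |w (c - 1)|
  refine Integrable.mono' (((hmom 0).const_mul K).add
      (integrable_sub_pow_mul_mul_of_odd hf hf0 hw hmom odd_one).norm)
    (hw.measurable.aestronglyMeasurable.mul hfc.aestronglyMeasurable)
    (Eventually.of_forall fun x => ?_)
  simp only [Pi.add_apply, pow_zero, one_mul, pow_one, norm_mul, Real.norm_eq_abs,
    abs_of_nonneg (hf0 x)]
  have hwf : 0 ≤ |w x| * f x := mul_nonneg (abs_nonneg _) (hf0 x)
  rcases le_total |x - c| 1 with hx | hx
  · obtain ⟨h1, h2⟩ := abs_le.1 hx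
    have hwx : |w x| ≤ K := (abs_le_max_abs_abs (hw (by linarith : x ≤ c + 1))
      (hw (by linarith : c - 1 ≤ x))).trans (max_le_add_of_nonneg (abs_nonneg _) (abs_nonneg _))
    nlinarith [mul_le_mul_of_nonneg_right hwx (hf0 x), mul_nonneg (abs_nonneg (x - c)) hwf]
  · nlinarith [mul_le_mul_of_nonneg_right hx hwf, mul_nonneg (by positivity : 0 ≤ K) (hf0 x)]

theorem integral_sub_pow_mul_mul (hf : ∀ x, HasDerivAt f (f x * (w x - (x - c) / α)) x)
    (hmom : ∀ n : ℕ, Integrable fun x => (x - c) ^ n * f x) {k : ℕ}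
    (hk : Integrable fun x => (x - c) ^ k * w x * f x) :
    ∫ x, (x - c) ^ k * w x * f x =
      (∫ x, (x - c) ^ (k + 1) * f x) / α - k * ∫ x, (x - c) ^ (k - 1) * f x := by
  have h := integral_eq_zero_of_hasDerivAt_of_integrable (hasDerivAt_sub_pow_mul hf k)
    ((((hmom (k - 1)).const_mul _).add hk).sub ((hmom (k + 1)).div_const α)) (hmom k)
  rw [integral_sub, integral_add, integral_const_mul, integral_div] at h
  · linarith
  exacts [(hmom (k - 1)).const_mul _, hk, ((hmom (k - 1)).const_mul _).add hk,
    (hmom (k + 1)).div_const α]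

theorem integral_sub_pow_succ_le_of_odd (hf : ∀ x, HasDerivAt f (f x * (w x - (x - c) / α)) x)
    (hf0 : ∀ x, 0 ≤ f x) (hw : Antitone w) (hα : 0 < α) (hprob : ∫ x, f x = 1)
    (hmean : ∫ x, (x - c) * f x = 0)
    (hmom : ∀ n : ℕ, Integrable fun x => (x - c) ^ n * f x) {k : ℕ} (hk : Odd k) :
    ∫ x, (x - c) ^ (k + 1) * f x ≤ α * k * ∫ x, (x - c) ^ (k - 1) * f x := by
  have hwf := integrable_mul_of_antitone hf hf0 hw hmom
  have hkwf := integrable_sub_pow_mul_mul_of_odd hf hf0 hw hmom hk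
  have hmean_w : ∫ x, w x * f x = 0 := by
    simpa [hmean] using integral_sub_pow_mul_mul hf hmom (k := 0) (by simpa using hwf)
  have hcov := (hk.antivary_sub_pow hw).integral_mul_mul_le hf0 hprob (hmom k) hwf hkwf
  rw [hmean_w, mul_zero, integral_sub_pow_mul_mul hf hmom hkwf, sub_nonpos, div_le_iff₀ hα] at hcov
  linarith

end StronglyLogConcave

/-- Moment recursion for strongly log-concave densities: if `f ∈ SLC(α)` with mean `μ`,
then for every `r ≥ 1`, `M_{2r}(X) ≤ α(2r-1)·M_{2r-2}(X)`, where `M_k(X) = E[(X-μ)^k]`. -/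
theorem slc_moment_recursion
    (f : ℝ → ℝ) (hf : Differentiable ℝ f) (hfpos : ∀ x, 0 < f x)
    (α : ℝ) (hα : 0 < α)
    (hslc : Antitone fun x => deriv f x / f x + x / α)
    (hprob : ∫ x, f x = 1)
    (μ : ℝ) (hmeanInt : Integrable fun x => x * f x) (hmean : ∫ x, x * f x = μ)
    (hmom : ∀ n : ℕ, Integrable fun x => (x - μ) ^ n * f x) :
    ∀ r : ℕ, 1 ≤ r →
      (∫ x, (x - μ) ^ (2 * r) * f x) ≤
        α * (2 * (r : ℝ) - 1) * ∫ x, (x - μ) ^ (2 * r - 2) * f x := by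
  intro r hr
  set w := fun x => deriv f x / f x + (x - μ) / α
  have hfw (x : ℝ) : HasDerivAt f (f x * (w x - (x - μ) / α)) x := by
    simpa only [w, add_sub_cancel_right, mul_div_cancel₀ _ (hfpos x).ne'] using (hf x).hasDerivAt
  have hw : Antitone w := fun a b hab => by
    simpa only [w, sub_div, add_sub_assoc'] using sub_le_sub_right (hslc hab) (μ / α)
  have hcentre : ∫ x, (x - μ) * f x = 0 := by
    simp only [sub_mul]
    rw [integral_sub hmeanInt ((by simpa using hmom 0 : Integrable f).const_mul μ),
      integral_const_mul, hmean, hprob, mul_one, sub_self]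
  have key := integral_sub_pow_succ_le_of_odd hfw (fun x => (hfpos x).le) hw hα hprob hcentre hmom
    (k := 2 * r - 1) ⟨r - 1, by omega⟩
  rwa [Nat.sub_add_cancel (by omega), Nat.sub_sub, Nat.cast_sub (by omega), Nat.cast_mul,
    Nat.cast_ofNat, Nat.cast_one] at key
end

section
/- Let X be a real random variable with mean μ and density f ∈ SLC(α) with all moments finite. Then for every r ≥ 1, E[(X−μ)^{2r}] ≤ (2r)!/r! · (α/2)^r, i.e. the even centred moments are dominated by those of the Gaussian N(μ, α). -/
/-!
Put `φ = f'/f + (x - μ)/α`, which is non-increasing, so that `(x - μ) f = α (φ f - f')`.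
Multiplying by `(x - μ)^(2s+1)` and integrating, the `f'` term integrates by parts to
`α (2s+1) M_{2s}`, while `∫ (x - μ)^(2s+1) φ f ≤ (∫ (x - μ)^(2s+1) f) (∫ φ f) = 0` by Chebyshev's
integral inequality, `(x - μ)^(2s+1)` being increasing and `φ` decreasing. Hence
`M_{2s+2} ≤ α (2s+1) M_{2s}`, which iterates to the Gaussian moments. The integrations by parts
are legitimate because `f' ≤ 0` near `+∞` and `f' ≥ 0` near `-∞`, so on the tails `∫ |x - μ|^k |f'|`
is controlled by a boundary term and a moment of `f`.
-/

open MeasureTheory Set Filter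

theorem integral_mul_mul_le_of_monotone_of_antitone {X : Type*} [LinearOrder X]
    [MeasurableSpace X] {ν : Measure X} [SFinite ν] {g u w : X → ℝ}
    (hg : Monotone g) (hu : Antitone u) (hw : ∀ x, 0 ≤ w x) (hwi : Integrable w ν)
    (hgw : Integrable (fun x => g x * w x) ν) (huw : Integrable (fun x => u x * w x) ν)
    (hguw : Integrable (fun x => g x * u x * w x) ν) :
    (∫ x, g x * u x * w x ∂ν) * ∫ x, w x ∂ν ≤
      (∫ x, g x * w x ∂ν) * ∫ x, u x * w x ∂ν := by
  have hpair : ∀ x y, (g x - g y) * (u x - u y) * (w x * w y) ≤ 0 := fun x y => by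
    refine mul_nonpos_of_nonpos_of_nonneg ?_ (mul_nonneg (hw x) (hw y))
    rcases le_total x y with h | h
    · exact mul_nonpos_of_nonpos_of_nonneg (sub_nonpos.2 (hg h)) (sub_nonneg.2 (hu h))
    · exact mul_nonpos_of_nonneg_of_nonpos (sub_nonneg.2 (hg h)) (sub_nonpos.2 (hu h))
  have hexpand : ∫ p : X × X, (g p.1 - g p.2) * (u p.1 - u p.2) * (w p.1 * w p.2) ∂ν.prod ν
      = 2 * ((∫ x, g x * u x * w x ∂ν) * (∫ x, w x ∂ν)
        - (∫ x, g x * w x ∂ν) * ∫ x, u x * w x ∂ν) := by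
    calc _ = ∫ p : X × X,
          ((g p.1 * u p.1 * w p.1) * w p.2 - (g p.1 * w p.1) * (u p.2 * w p.2))
            - ((u p.1 * w p.1) * (g p.2 * w p.2) - w p.1 * (g p.2 * u p.2 * w p.2)) ∂ν.prod ν := by
          congr 1; ext p; ring
      _ = _ := by
          rw [integral_sub ((hguw.mul_prod hwi).sub' (hgw.mul_prod huw))
              ((huw.mul_prod hgw).sub' (hwi.mul_prod hguw)),
            integral_sub (hguw.mul_prod hwi) (hgw.mul_prod huw),
            integral_sub (huw.mul_prod hgw) (hwi.mul_prod hguw),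
            integral_prod_mul (fun x => g x * u x * w x) w,
            integral_prod_mul (fun x => g x * w x) (fun x => u x * w x),
            integral_prod_mul (fun x => u x * w x) (fun x => g x * w x),
            integral_prod_mul w (fun x => g x * u x * w x)]
          ring
  have := integral_nonpos (μ := ν.prod ν) fun p => hpair p.1 p.2
  linarith

theorem integrableOn_Ioi_comp_neg_iff {E : Type*} [NormedAddCommGroup E] {h : ℝ → E} {a : ℝ} :
    IntegrableOn (fun x => h (-x)) (Ioi (-a)) ↔ IntegrableOn h (Iic a) := by
  rw [integrableOn_Iic_iff_integrableOn_Iio, ← (Measure.measurePreserving_neg volume)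
    |>.integrableOn_comp_preimage (Homeomorph.neg ℝ).measurableEmbedding]
  simp [Function.comp_def]

theorem integrableOn_Ioi_mul_deriv_of_deriv_nonpos {p p' g g' : ℝ → ℝ} {b : ℝ}
    (hp : ∀ x, HasDerivAt p (p' x) x) (hg : ∀ x, HasDerivAt g (g' x) x)
    (hp0 : ∀ x ∈ Ici b, 0 ≤ p x) (hg0 : ∀ x ∈ Ici b, 0 ≤ g x)
    (hg' : ∀ x ∈ Ici b, g' x ≤ 0)
    (hp'g : IntegrableOn (fun x => p' x * g x) (Ioi b))
    (hpg' : ∀ M, IntervalIntegrable (fun x => p x * g' x) volume b M) :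
    IntegrableOn (fun x => p x * g' x) (Ioi b) := by
  refine integrableOn_Ioi_of_intervalIntegral_norm_bounded
    (p b * g b + ∫ x in Ioi b, ‖p' x * g x‖) b (fun M => (hpg' M).1) tendsto_id ?_
  filter_upwards [eventually_ge_atTop b] with M hM
  have hp'g_loc : IntervalIntegrable (fun x => p' x * g x) volume b M :=
    (intervalIntegrable_iff_integrableOn_Ioc_of_le hM).2 (hp'g.mono_set Ioc_subset_Ioi_self)
  have hparts : ∫ x in b..M, (p' x * g x + p x * g' x) = p M * g M - p b * g b :=
    intervalIntegral.integral_eq_sub_of_hasDerivAt (fun x _ => (hp x).mul (hg x))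
      (hp'g_loc.add (hpg' M))
  have hnorm : ∫ x in b..M, ‖p x * g' x‖ = -∫ x in b..M, p x * g' x := by
    rw [← intervalIntegral.integral_neg]
    refine intervalIntegral.integral_congr fun x hx => ?_
    rw [uIcc_of_le hM] at hx
    exact Real.norm_of_nonpos (mul_nonpos_of_nonneg_of_nonpos (hp0 x hx.1) (hg' x hx.1))
  have hbound : ∫ x in b..M, p' x * g x ≤ ∫ x in Ioi b, ‖p' x * g x‖ := by
    rw [intervalIntegral.integral_of_le hM]
    exact ((Real.le_norm_self _).trans (norm_integral_le_integral_norm _)).trans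
      (setIntegral_mono_set hp'g.norm (ae_of_all _ fun _ => norm_nonneg _)
        Ioc_subset_Ioi_self.eventuallyLE)
  rw [intervalIntegral.integral_add hp'g_loc (hpg' M)] at hparts
  nlinarith [hp0 M hM, hg0 M hM, mul_nonneg (hp0 M hM) (hg0 M hM)]

theorem integrableOn_Iic_mul_deriv_of_deriv_nonneg {p p' g g' : ℝ → ℝ} {a : ℝ}
    (hp : ∀ x, HasDerivAt p (p' x) x) (hg : ∀ x, HasDerivAt g (g' x) x)
    (hp0 : ∀ x ∈ Iic a, 0 ≤ p x) (hg0 : ∀ x ∈ Iic a, 0 ≤ g x)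
    (hg' : ∀ x ∈ Iic a, 0 ≤ g' x)
    (hp'g : IntegrableOn (fun x => p' x * g x) (Iic a))
    (hpg' : ∀ m, IntervalIntegrable (fun x => p x * g' x) volume m a) :
    IntegrableOn (fun x => p x * g' x) (Iic a) := by
  have key := integrableOn_Ioi_mul_deriv_of_deriv_nonpos (b := -a)
    (p := fun x => p (-x)) (g := fun x => g (-x))
    (p' := fun x => -p' (-x)) (g' := fun x => -g' (-x))
    (fun x => by simpa [Function.comp_def] using (hp (-x)).comp x (hasDerivAt_neg x))
    (fun x => by simpa [Function.comp_def] using (hg (-x)).comp x (hasDerivAt_neg x))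
    (fun x hx => hp0 (-x) (by simp at hx ⊢; linarith))
    (fun x hx => hg0 (-x) (by simp at hx ⊢; linarith))
    (fun x hx => neg_nonpos.2 (hg' (-x) (by simp at hx ⊢; linarith)))
    (by simpa using (integrableOn_Ioi_comp_neg_iff.2 hp'g).neg)
    (fun M => by
      simpa [Pi.neg_def] using ((IntervalIntegrable.iff_comp_neg).1 (hpg' (-M))).neg.symm)
  exact integrableOn_Ioi_comp_neg_iff.1 (by simpa using key.neg)

/-- The class `SLC(α)`. -/
structure StronglyLogConcave (α : ℝ) (f : ℝ → ℝ) : Prop where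
  differentiable : Differentiable ℝ f
  pos : ∀ x, 0 < f x
  param_pos : 0 < α
  antitone : Antitone fun x => deriv f x / f x + x / α

namespace StronglyLogConcave

variable {α μ : ℝ} {f : ℝ → ℝ}

noncomputable def score (α μ : ℝ) (f : ℝ → ℝ) (x : ℝ) : ℝ :=
  deriv f x / f x + (x - μ) / α

theorem antitone_score (hf : StronglyLogConcave α f) : Antitone (score α μ f) :=
  fun x y hxy => by
  have := hf.antitone hxy
  simp only [score, sub_div]
  linarith

theorem score_mul_self (hf : StronglyLogConcave α f) (x : ℝ) :
    score α μ f x * f x = deriv f x + (x - μ) / α * f x := by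
  simp only [score, add_mul, div_mul_cancel₀ _ (hf.pos x).ne']

theorem deriv_eq (hf : StronglyLogConcave α f) (x : ℝ) :
    deriv f x = (score α μ f x - (x - μ) / α) * f x := by
  rw [sub_mul, hf.score_mul_self]
  ring

theorem eventually_deriv_nonpos (hf : StronglyLogConcave α f) :
    ∀ᶠ x in atTop, deriv f x ≤ 0 := by
  filter_upwards [eventually_ge_atTop 0, eventually_ge_atTop (α * score α 0 f 0)] with x hx₀ hx
  have hscore : score α 0 f x ≤ x / α := by
    rw [le_div_iff₀ hf.param_pos]
    nlinarith [hf.antitone_score (μ := 0) hx₀, hf.param_pos]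
  rw [hf.deriv_eq (μ := 0), sub_zero]
  exact mul_nonpos_of_nonpos_of_nonneg (sub_nonpos.2 hscore) (hf.pos x).le

theorem eventually_deriv_nonneg (hf : StronglyLogConcave α f) :
    ∀ᶠ x in atBot, 0 ≤ deriv f x := by
  filter_upwards [eventually_le_atBot 0, eventually_le_atBot (α * score α 0 f 0)] with x hx₀ hx
  have hscore : x / α ≤ score α 0 f x := by
    rw [div_le_iff₀ hf.param_pos]
    nlinarith [hf.antitone_score (μ := 0) hx₀, hf.param_pos]
  rw [hf.deriv_eq (μ := 0), sub_zero]
  exact mul_nonneg (sub_nonneg.2 hscore) (hf.pos x).le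

theorem intervalIntegrable_deriv (hf : StronglyLogConcave α f) (a b : ℝ) :
    IntervalIntegrable (deriv f) volume a b := by
  have hscore : IntervalIntegrable (score α 0 f) volume a b :=
    hf.antitone_score.intervalIntegrable
  have hlin : IntervalIntegrable (fun x => x / α) volume a b :=
    Continuous.intervalIntegrable (by fun_prop) a b
  refine ((hscore.sub hlin).mul_continuousOn hf.differentiable.continuous.continuousOn).congr ?_
  exact fun x _ => by rw [hf.deriv_eq (μ := 0), sub_zero]

theorem integrable_pow_mul_deriv (hf : StronglyLogConcave α f)
    (hmom : ∀ n : ℕ, Integrable fun x => (x - μ) ^ n * f x) (k : ℕ) :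
    Integrable fun x => (x - μ) ^ k * deriv f x := by
  obtain ⟨b, hb⟩ :=
    (hf.eventually_deriv_nonpos.and (eventually_ge_atTop μ)).exists_forall_of_atTop
  obtain ⟨a, ha⟩ :=
    (hf.eventually_deriv_nonneg.and (eventually_le_atBot μ)).exists_forall_of_atBot
  have hloc : ∀ c d, IntervalIntegrable (fun x => (x - μ) ^ k * deriv f x) volume c d :=
    fun c d => (hf.intervalIntegrable_deriv c d).continuousOn_mul (by fun_prop)
  have hright : IntegrableOn (fun x => (x - μ) ^ k * deriv f x) (Ioi b) :=
    integrableOn_Ioi_mul_deriv_of_deriv_nonpos (p' := fun x => k * (x - μ) ^ (k - 1))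
      (fun x => by simpa using ((hasDerivAt_id' x).sub_const μ).fun_pow k)
      (fun x => (hf.differentiable x).hasDerivAt)
      (fun x hx => pow_nonneg (sub_nonneg.2 (hb x hx).2) k) (fun x _ => (hf.pos x).le)
      (fun x hx => (hb x hx).1)
      (by simpa [mul_assoc] using ((hmom (k - 1)).const_mul k).integrableOn) (hloc b)
  have hflip : ∀ (n : ℕ) (x : ℝ), (μ - x) ^ n = (-1) ^ n * (x - μ) ^ n := fun n x => by
    rw [← neg_pow, neg_sub]
  have hmom' : ∀ n : ℕ, Integrable fun x => (μ - x) ^ n * f x := fun n => by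
    simpa only [hflip, mul_assoc] using (hmom n).const_mul ((-1) ^ n)
  have hleft : IntegrableOn (fun x => (μ - x) ^ k * deriv f x) (Iic a) :=
    integrableOn_Iic_mul_deriv_of_deriv_nonneg (p' := fun x => -(k * (μ - x) ^ (k - 1)))
      (fun x => by simpa using ((hasDerivAt_id' x).const_sub μ).fun_pow k)
      (fun x => (hf.differentiable x).hasDerivAt)
      (fun x hx => pow_nonneg (sub_nonneg.2 (ha x hx).2) k) (fun x _ => (hf.pos x).le)
      (fun x hx => (ha x hx).1)
      (by simpa [mul_assoc] using ((hmom' (k - 1)).const_mul (-k)).integrableOn)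
      (fun m => (hf.intervalIntegrable_deriv m a).continuousOn_mul (by fun_prop))
  rw [← integrableOn_univ, ← Iic_union_Ioi (a := a),
    ← Ioc_union_Ioi_eq_Ioi ((ha a le_rfl).2.trans (hb b le_rfl).2)]
  refine .union ?_ ((hloc a b).1.union hright)
  refine IntegrableOn.congr_fun (hleft.const_mul ((-1) ^ k)) (fun x _ => ?_) measurableSet_Iic
  rw [hflip, ← mul_assoc, ← mul_assoc, ← mul_pow, neg_one_mul, neg_neg, one_pow, one_mul]

theorem integral_deriv_eq_zero (hf : StronglyLogConcave α f)
    (hmom : ∀ n : ℕ, Integrable fun x => (x - μ) ^ n * f x) : ∫ x, deriv f x = 0 :=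
  integral_eq_zero_of_hasDerivAt_of_integrable (fun x => (hf.differentiable x).hasDerivAt)
    (by simpa using hf.integrable_pow_mul_deriv hmom 0) (by simpa using hmom 0)

theorem integrable_pow_mul_score_mul (hf : StronglyLogConcave α f)
    (hmom : ∀ n : ℕ, Integrable fun x => (x - μ) ^ n * f x) (k : ℕ) :
    Integrable fun x => (x - μ) ^ k * (score α μ f x * f x) := by
  refine ((hf.integrable_pow_mul_deriv hmom k).add ((hmom (k + 1)).div_const α)).congr
    (Eventually.of_forall fun x => ?_)
  simp only [Pi.add_apply, hf.score_mul_self]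
  ring

theorem integral_score_mul_eq_zero (hf : StronglyLogConcave α f)
    (hmom : ∀ n : ℕ, Integrable fun x => (x - μ) ^ n * f x)
    (hcenter : ∫ x, (x - μ) * f x = 0) : ∫ x, score α μ f x * f x = 0 := by
  simp only [hf.score_mul_self, div_mul_eq_mul_div]
  rw [integral_add (by simpa using hf.integrable_pow_mul_deriv hmom 0)
    (by simpa using (hmom 1).div_const α), integral_div, hf.integral_deriv_eq_zero hmom, hcenter]
  simp

theorem integral_pow_succ_mul_deriv (hf : StronglyLogConcave α f)
    (hmom : ∀ n : ℕ, Integrable fun x => (x - μ) ^ n * f x) (k : ℕ) :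
    ∫ x, (x - μ) ^ (k + 1) * deriv f x = -((k + 1) * ∫ x, (x - μ) ^ k * f x) := by
  rw [← integral_const_mul]
  refine (integral_mul_deriv_eq_deriv_mul_of_integrable (u' := fun x => (k + 1) * (x - μ) ^ k)
    (fun x _ => by simpa using ((hasDerivAt_id' x).sub_const μ).fun_pow (k + 1))
    (fun x _ => (hf.differentiable x).hasDerivAt) (hf.integrable_pow_mul_deriv hmom (k + 1))
    ?_ (hmom (k + 1))).trans ?_
  · simpa only [Pi.mul_def, mul_assoc] using (hmom k).const_mul (k + 1 : ℝ)
  · simp only [mul_assoc]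

theorem integral_pow_two_mul_succ_le (hf : StronglyLogConcave α f)
    (hmom : ∀ n : ℕ, Integrable fun x => (x - μ) ^ n * f x) (hprob : ∫ x, f x = 1)
    (hcenter : ∫ x, (x - μ) * f x = 0) (s : ℕ) :
    ∫ x, (x - μ) ^ (2 * (s + 1)) * f x ≤
      α * (2 * s + 1) * ∫ x, (x - μ) ^ (2 * s) * f x := by
  have hodd : Monotone fun x : ℝ => (x - μ) ^ (2 * s + 1) :=
    (Odd.strictMono_pow ⟨s, rfl⟩).monotone.comp fun x y h => sub_le_sub_right h μ
  have hcheb : ∫ x, (x - μ) ^ (2 * s + 1) * score α μ f x * f x ≤ 0 := by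
    have := integral_mul_mul_le_of_monotone_of_antitone hodd hf.antitone_score
      (fun x => (hf.pos x).le) (by simpa using hmom 0) (hmom _)
      (by simpa using hf.integrable_pow_mul_score_mul hmom 0)
      (by simpa only [mul_assoc] using hf.integrable_pow_mul_score_mul hmom (2 * s + 1))
    rwa [hprob, hf.integral_score_mul_eq_zero hmom hcenter, mul_one, mul_zero] at this
  have hsplit : ∫ x, (x - μ) ^ (2 * (s + 1)) * f x
      = α * (∫ x, (x - μ) ^ (2 * s + 1) * score α μ f x * f x)
        - α * ∫ x, (x - μ) ^ (2 * s + 1) * deriv f x := by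
    rw [← integral_const_mul, ← integral_const_mul, ← integral_sub]
    · congr 1; ext x
      rw [mul_assoc _ (score α μ f x), hf.score_mul_self]
      field_simp [hf.param_pos.ne']
      ring
    · simpa only [mul_assoc] using
        (hf.integrable_pow_mul_score_mul hmom (2 * s + 1)).const_mul α
    · exact (hf.integrable_pow_mul_deriv hmom _).const_mul α
  rw [hsplit, hf.integral_pow_succ_mul_deriv hmom]
  push_cast
  nlinarith [mul_nonpos_of_nonneg_of_nonpos hf.param_pos.le hcheb]

end StronglyLogConcave

theorem le_factorial_two_mul_div_factorial_mul_pow {M : ℕ → ℝ} {α : ℝ} (hα : 0 ≤ α)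
    (h0 : M 0 ≤ 1) (hstep : ∀ s : ℕ, M (s + 1) ≤ α * (2 * s + 1) * M s) (r : ℕ) :
    M r ≤ (((2 * r).factorial : ℝ) / (r.factorial : ℝ)) * (α / 2) ^ r := by
  induction r with
  | zero => simpa using h0
  | succ s ih =>
    calc M (s + 1) ≤ α * (2 * s + 1) * M s := hstep s
      _ ≤ α * (2 * s + 1) * ((((2 * s).factorial : ℝ) / (s.factorial : ℝ)) * (α / 2) ^ s) := by
        gcongr
      _ = (((2 * (s + 1)).factorial : ℝ) / ((s + 1).factorial : ℝ)) * (α / 2) ^ (s + 1) := by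
        rw [show 2 * (s + 1) = 2 * s + 1 + 1 by ring, Nat.factorial_succ, Nat.factorial_succ,
          Nat.factorial_succ]
        push_cast
        field_simp
        ring

theorem slc_moment_bound_general
    (f : ℝ → ℝ) (hf : Differentiable ℝ f) (hfpos : ∀ x, 0 < f x)
    (α : ℝ) (hα : 0 < α)
    (hslc : Antitone fun x => deriv f x / f x + x / α)
    (hprob : ∫ x, f x = 1)
    (μ : ℝ) (hmean : ∫ x, x * f x = μ)
    (hmom : ∀ n : ℕ, Integrable fun x => (x - μ) ^ n * f x) :
    ∀ r : ℕ, 1 ≤ r →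
      (∫ x, (x - μ) ^ (2 * r) * f x) ≤
        (((2 * r).factorial : ℝ) / (r.factorial : ℝ)) * (α / 2) ^ r := by
  have hSLC : StronglyLogConcave α f := ⟨hf, hfpos, hα, hslc⟩
  have hfi : Integrable f := by simpa using hmom 0
  have hcenter : ∫ x, (x - μ) * f x = 0 := by
    have hxf : Integrable fun x => x * f x := by
      refine ((hmom 1).add (hfi.const_mul μ)).congr (Eventually.of_forall fun x => ?_)
      simp only [Pi.add_apply]
      ring
    simp only [sub_mul]
    rw [integral_sub hxf (hfi.const_mul μ), integral_const_mul, hmean, hprob, mul_one, sub_self]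
  intro r _
  exact le_factorial_two_mul_div_factorial_mul_pow
    (M := fun s => ∫ x, (x - μ) ^ (2 * s) * f x) hα.le (by simp [hprob])
    (hSLC.integral_pow_two_mul_succ_le hmom hprob hcenter) r

/-- Gaussian moment domination for strongly log-concave densities: if `f ∈ SLC(α)` with
mean `μ` and all moments finite, then for every `r ≥ 1`,
`E[(X-μ)^{2r}] ≤ (2r)!/r! · (α/2)^r`. -/
theorem slc_moment_bound
    (f : ℝ → ℝ) (hf : Differentiable ℝ f) (hfpos : ∀ x, 0 < f x)
    (α : ℝ) (hα : 0 < α)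
    (hslc : Antitone fun x => deriv f x / f x + x / α)
    (hprob : ∫ x, f x = 1)
    (μ : ℝ) (hmeanInt : Integrable fun x => x * f x) (hmean : ∫ x, x * f x = μ)
    (hmom : ∀ n : ℕ, Integrable fun x => (x - μ) ^ n * f x) :
    ∀ r : ℕ, 1 ≤ r →
      (∫ x, (x - μ) ^ (2 * r) * f x) ≤
        (((2 * r).factorial : ℝ) / (r.factorial : ℝ)) * (α / 2) ^ r :=
  slc_moment_bound_general f hf hfpos α hα hslc hprob μ hmean hmom
end

section
/- Let X be an ℕ-valued random variable with mean μ and pmf f ∈ discrete SLC(α). If for some strictly increasing v: ℕ → ℝ equality α·E[v(X+1)−v(X)] = E[(X−μ)v(X)] holds, then X is Poisson with mean α. -/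
/-!
Write `T = steinTail f μ`, so that `T k = ∑_{j>k} (j - μ) f j`. Abel summation turns the right-hand
side of the equality into `∑ (v (k+1) - v k) T k`. Discrete SLC(α) says that `α f k / f (k+1) - k`
is nondecreasing and at least `1`; this gives `μ ≤ α` and makes the increments of `α f - T` change
sign at most once, from `+` to `-`. As `α f - T` is `(α - μ) f 0 ≥ 0` at `0` and tends to `0`, it is
nonnegative, so `α ∑ (v (k+1) - v k) f k ≥ ∑ (v (k+1) - v k) T k`, and since `v` is strictly
increasing equality forces `T = α f`. At `k = 0` this reads `μ = α`, and then the increments of `T`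
give the Poisson recursion `(k+1) f (k+1) = α f k`.
-/

open Filter Topology Finset

theorem nonneg_of_sub_succ_eq_mul_of_tendsto_zero {U c b : ℕ → ℝ} (hc : ∀ k, 0 ≤ c k)
    (hb : Monotone b) (hU : ∀ k, U k - U (k + 1) = c k * b k) (h0 : 0 ≤ U 0)
    (hlim : Tendsto U atTop (𝓝 0)) (k : ℕ) : 0 ≤ U k := by
  by_cases hbk : 0 ≤ b k
  · have hdecr : ∀ m, k ≤ m → U m ≤ U k := by
      refine Nat.le_induction le_rfl fun m hkm ih => ?_
      have := mul_nonneg (hc m) (hbk.trans (hb hkm))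
      linarith [hU m]
    exact le_of_tendsto hlim (eventually_atTop.2 ⟨k, hdecr⟩)
  · have hincr : ∀ m, m ≤ k → U 0 ≤ U m := by
      intro m
      induction m with
      | zero => exact fun _ => le_rfl
      | succ m ih =>
        intro hmk
        have := mul_nonpos_of_nonneg_of_nonpos (hc m)
          ((hb (by omega : m ≤ k)).trans (not_le.1 hbk).le)
        linarith [hU m, ih (by omega)]
    exact h0.trans (hincr k le_rfl)

theorem Monotone.tendsto_mul_sum_range_of_hasSum_zero {v g : ℕ → ℝ} (hv : Monotone v)
    (hg : HasSum g 0) (hvg : Summable fun k => v k * g k) :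
    Tendsto (fun N => v N * ∑ k ∈ range N, g k) atTop (𝓝 0) := by
  let C : ℕ → ℝ := fun k => (|v k| + |v 0|) * |g k|
  have hC : Summable C := by
    simpa only [C, add_mul, abs_mul] using hvg.abs.add (hg.summable.abs.mul_left |v 0|)
  refine squeeze_zero_norm (fun N => ?_) (tendsto_sum_nat_add C)
  have htail : ∑ k ∈ range N, g k = -∑' j, g (j + N) := by
    linarith [hg.summable.sum_add_tsum_nat_add N, hg.tsum_eq]
  have hshift : Summable fun j => |g (j + N)| :=
    (summable_nat_add_iff (f := fun k => |g k|) N).2 hg.summable.abs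
  have hbound (j : ℕ) : |v N| * |g (j + N)| ≤ C (j + N) := by
    have h : |v N| ≤ |v (j + N)| + |v 0| :=
      (abs_le_max_abs_abs (hv (Nat.zero_le N)) (hv (Nat.le_add_left N j))).trans
        (max_le (le_add_of_nonneg_left (abs_nonneg _)) (le_add_of_nonneg_right (abs_nonneg _)))
    exact mul_le_mul_of_nonneg_right h (abs_nonneg _)
  calc ‖v N * ∑ k ∈ range N, g k‖ = |v N| * |∑' j, g (j + N)| := by
        rw [Real.norm_eq_abs, htail, abs_mul, abs_neg]
    _ ≤ |v N| * ∑' j, |g (j + N)| := by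
        gcongr
        simpa only [Real.norm_eq_abs] using
          norm_tsum_le_tsum_norm (f := fun j => g (j + N)) (by simpa only [Real.norm_eq_abs])
    _ = ∑' j, |v N| * |g (j + N)| := tsum_mul_left.symm
    _ ≤ ∑' j, C (j + N) :=
        hasSum_le hbound (hshift.mul_left _).hasSum ((summable_nat_add_iff (f := C) N).2 hC).hasSum

-- `T ≠ 0` excludes the junk value `∑' k, w k * F k = 0` of a non-summable series.
theorem eq_of_le_of_hasSum_mul_tsum {w T F : ℕ → ℝ} (hw : ∀ k, 0 < w k) (hT : ∀ k, 0 ≤ T k)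
    (hT0 : T ≠ 0) (hle : ∀ k, T k ≤ F k) (hsum : HasSum (fun k => w k * T k) (∑' k, w k * F k)) :
    T = F := by
  have hwF : Summable fun k => w k * F k := by
    by_contra h
    rw [tsum_eq_zero_of_not_summable h,
      hasSum_zero_iff_of_nonneg fun k => mul_nonneg (hw k).le (hT k)] at hsum
    exact hT0 (funext fun k => (mul_eq_zero.1 (congrFun hsum k)).resolve_left (hw k).ne')
  have hgap := hwF.hasSum.sub hsum
  rw [sub_self, hasSum_zero_iff_of_nonneg
    fun k => sub_nonneg.2 (mul_le_mul_of_nonneg_left (hle k) (hw k).le)] at hgap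
  funext k
  have := congrFun hgap k
  simp only [Pi.zero_apply, ← mul_sub, mul_eq_zero, (hw k).ne', false_or, sub_eq_zero] at this
  exact this.symm

theorem eq_exp_neg_mul_pow_div_factorial {f : ℕ → ℝ} {α : ℝ} (hf : HasSum f 1)
    (hrec : ∀ k : ℕ, ((k : ℝ) + 1) * f (k + 1) = α * f k) (n : ℕ) :
    f n = Real.exp (-α) * α ^ n / n.factorial := by
  have hform (n : ℕ) : f n = f 0 * (α ^ n / n.factorial) := by
    induction n with
    | zero => simp
    | succ n ih =>
      have hstep : f (n + 1) = α * f n / (n + 1) := by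
        rw [eq_div_iff n.cast_add_one_ne_zero]
        linarith [hrec n]
      rw [hstep, ih, Nat.factorial_succ, pow_succ]
      push_cast
      field_simp
  have hexp : HasSum (fun n : ℕ => f 0 * (α ^ n / n.factorial)) (f 0 * Real.exp α) := by
    rw [Real.exp_eq_exp_ℝ]
    exact (NormedSpace.expSeries_div_hasSum_exp α).mul_left _
  have hf0 : f 0 * Real.exp α = 1 := hexp.unique (by simpa only [← hform] using hf)
  rw [hform n, Real.exp_neg, eq_inv_of_mul_eq_one_left hf0]
  ring

theorem hasSum_natCast_sub_mul_zero {f : ℕ → ℝ} {μ : ℝ} (hf : HasSum f 1)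
    (hmean : HasSum (fun n : ℕ => (n : ℝ) * f n) μ) :
    HasSum (fun k : ℕ => ((k : ℝ) - μ) * f k) 0 := by
  simpa [sub_mul] using hmean.sub (hf.mul_left μ)

theorem summable_natCast_sub_mul_mul {f v : ℕ → ℝ} (hf : ∀ k, 0 ≤ f k) (μ : ℝ)
    (hint : Summable fun k : ℕ => |v k| * f k * (1 + (k : ℝ))) :
    Summable fun k : ℕ => ((k : ℝ) - μ) * v k * f k := by
  refine (hint.mul_left (1 + |μ|)).of_norm_bounded fun k => ?_
  have hk : |(k : ℝ) - μ| ≤ (1 + |μ|) * (1 + k) := by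
    have hk0 : (0 : ℝ) ≤ k := k.cast_nonneg
    nlinarith [abs_sub (k : ℝ) μ, abs_nonneg μ, abs_of_nonneg hk0]
  rw [Real.norm_eq_abs, abs_mul, abs_mul, abs_of_nonneg (hf k)]
  calc |(k : ℝ) - μ| * |v k| * f k ≤ (1 + |μ|) * (1 + k) * |v k| * f k := by gcongr; exact hf k
    _ = (1 + |μ|) * (|v k| * f k * (1 + k)) := by ring

-- Equals `∑_{j>k} (j - μ) f j` when `μ` is the mean of `f`.
def steinTail (f : ℕ → ℝ) (μ : ℝ) (k : ℕ) : ℝ :=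
  -∑ j ∈ range (k + 1), ((j : ℝ) - μ) * f j

section steinTail

variable {f : ℕ → ℝ} {μ : ℝ}

theorem steinTail_zero : steinTail f μ 0 = μ * f 0 := by
  simp [steinTail]

theorem steinTail_sub_succ (k : ℕ) :
    steinTail f μ k - steinTail f μ (k + 1) = f (k + 1) * ((k : ℝ) + 1 - μ) := by
  simp only [steinTail, sum_range_succ (n := k + 1)]
  push_cast
  ring

theorem tendsto_steinTail (h : HasSum (fun k : ℕ => ((k : ℝ) - μ) * f k) 0) :
    Tendsto (steinTail f μ) atTop (𝓝 0) := by
  unfold steinTail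
  simpa [Function.comp_def] using (h.tendsto_sum_nat.comp (tendsto_add_atTop_nat 1)).neg

theorem steinTail_nonneg (hf : ∀ k, 0 ≤ f k) (hμ : 0 ≤ μ)
    (h : HasSum (fun k : ℕ => ((k : ℝ) - μ) * f k) 0) (k : ℕ) : 0 ≤ steinTail f μ k :=
  nonneg_of_sub_succ_eq_mul_of_tendsto_zero (b := fun k : ℕ => (k : ℝ) + 1 - μ)
    (fun k => hf (k + 1)) (fun i j hij => by simp only; gcongr) steinTail_sub_succ
    (steinTail_zero.symm ▸ mul_nonneg hμ (hf 0)) (tendsto_steinTail h) k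

theorem sum_range_sub_mul_steinTail (v : ℕ → ℝ) (N : ℕ) :
    ∑ k ∈ range N, (v (k + 1) - v k) * steinTail f μ k =
      ∑ k ∈ range N, ((k : ℝ) - μ) * v k * f k - v N * ∑ k ∈ range N, ((k : ℝ) - μ) * f k := by
  induction N with
  | zero => simp
  | succ N ih =>
    rw [sum_range_succ, ih, sum_range_succ, sum_range_succ]
    simp only [steinTail, sum_range_succ]
    ring

theorem hasSum_sub_mul_steinTail {v : ℕ → ℝ} (hv : Monotone v) (hf : ∀ k, 0 ≤ f k)
    (hμ : 0 ≤ μ) (hmean : HasSum (fun k : ℕ => ((k : ℝ) - μ) * f k) 0)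
    (hvf : Summable fun k : ℕ => ((k : ℝ) - μ) * v k * f k) :
    HasSum (fun k => (v (k + 1) - v k) * steinTail f μ k)
      (∑' k : ℕ, ((k : ℝ) - μ) * v k * f k) := by
  rw [hasSum_iff_tendsto_nat_of_nonneg
    (fun k => mul_nonneg (sub_nonneg.2 (hv k.le_succ)) (steinTail_nonneg hf hμ hmean k))]
  have hboundary := hv.tendsto_mul_sum_range_of_hasSum_zero hmean
    (hvf.congr fun k => by ring)
  simpa [sum_range_sub_mul_steinTail] using hvf.hasSum.tendsto_sum_nat.sub hboundary

end steinTail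

-- `∇f(k) / f(k) + k / α` is nonincreasing, where `∇f(k) = f k - f (k - 1)` and `f (-1) = 0`.
def IsDiscreteSLC (f : ℕ → ℝ) (α : ℝ) : Prop :=
  Antitone fun k : ℕ => (if k = 0 then f 0 else f k - f (k - 1)) / f k + (k : ℝ) / α

namespace IsDiscreteSLC

variable {f : ℕ → ℝ} {α : ℝ}

theorem one_le_mul_div (hslc : IsDiscreteSLC f α) (hpos : ∀ n, 0 < f n) (hα : 0 < α) :
    1 ≤ α * f 0 / f 1 := by
  have H := hslc zero_le_one
  simp only [if_pos, one_ne_zero, if_false, Nat.sub_self, Nat.cast_zero, Nat.cast_one, zero_div,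
    add_zero, div_self (hpos 0).ne', sub_div, div_self (hpos 1).ne'] at H
  rw [mul_div_assoc, ← div_le_iff₀' hα]
  linarith

theorem mul_div_add_one_le (hslc : IsDiscreteSLC f α) (hpos : ∀ n, 0 < f n) (hα : 0 < α)
    (k : ℕ) : α * f k / f (k + 1) + 1 ≤ α * f (k + 1) / f (k + 2) := by
  have H := hslc (Nat.le_succ (k + 1))
  simp only [Nat.succ_ne_zero, if_false, Nat.add_sub_cancel, sub_div,
    div_self (hpos (k + 2)).ne', div_self (hpos (k + 1)).ne'] at H
  push_cast at H
  have h : f k / f (k + 1) + 1 / α ≤ f (k + 1) / f (k + 2) := by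
    have : ((k : ℝ) + 1 + 1) / α = ((k : ℝ) + 1) / α + 1 / α := by ring
    linarith
  calc α * f k / f (k + 1) + 1 = α * (f k / f (k + 1) + 1 / α) := by field_simp
    _ ≤ α * (f (k + 1) / f (k + 2)) := mul_le_mul_of_nonneg_left h hα.le
    _ = α * f (k + 1) / f (k + 2) := (mul_div_assoc ..).symm

theorem monotone_mul_div_sub (hslc : IsDiscreteSLC f α) (hpos : ∀ n, 0 < f n) (hα : 0 < α) :
    Monotone fun k : ℕ => α * f k / f (k + 1) - k :=
  monotone_nat_of_le_succ fun k => by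
    have := hslc.mul_div_add_one_le hpos hα k
    push_cast
    linarith

theorem succ_le_mul_div (hslc : IsDiscreteSLC f α) (hpos : ∀ n, 0 < f n) (hα : 0 < α) (k : ℕ) :
    (k : ℝ) + 1 ≤ α * f k / f (k + 1) := by
  have := hslc.monotone_mul_div_sub hpos hα (Nat.zero_le k)
  have := hslc.one_le_mul_div hpos hα
  simp only [Nat.cast_zero, sub_zero] at *
  linarith

theorem mean_le (hslc : IsDiscreteSLC f α) (hpos : ∀ n, 0 < f n) (hα : 0 < α) {μ : ℝ}
    (hf : HasSum f 1) (hmean : HasSum (fun n : ℕ => (n : ℝ) * f n) μ) : μ ≤ α := by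
  have hshift : HasSum (fun k : ℕ => ((k : ℝ) + 1) * f (k + 1)) μ := by
    simpa using (hasSum_nat_add_iff' 1).2 hmean
  have hle (k : ℕ) : ((k : ℝ) + 1) * f (k + 1) ≤ α * f k := by
    have := mul_le_mul_of_nonneg_right (hslc.succ_le_mul_div hpos hα k) (hpos (k + 1)).le
    rwa [div_mul_cancel₀ _ (hpos (k + 1)).ne'] at this
  simpa using hasSum_le hle hshift (hf.mul_left α)

theorem steinTail_le {μ : ℝ} (hslc : IsDiscreteSLC f α) (hpos : ∀ n, 0 < f n) (hα : 0 < α)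
    (hf : HasSum f 1) (hmean : HasSum (fun n : ℕ => (n : ℝ) * f n) μ) (k : ℕ) :
    steinTail f μ k ≤ α * f k := by
  have hdiff (k : ℕ) : (α * f k - steinTail f μ k) - (α * f (k + 1) - steinTail f μ (k + 1)) =
      f (k + 1) * (α * f k / f (k + 1) - k + (μ - α - 1)) := by
    rw [mul_add, mul_sub, mul_div_cancel₀ _ (hpos (k + 1)).ne']
    linear_combination -steinTail_sub_succ (f := f) (μ := μ) k
  have h0 : 0 ≤ α * f 0 - steinTail f μ 0 := by
    rw [steinTail_zero, ← sub_mul]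
    exact mul_nonneg (sub_nonneg.2 (hslc.mean_le hpos hα hf hmean)) (hpos 0).le
  have hlim : Tendsto (fun k => α * f k - steinTail f μ k) atTop (𝓝 0) := by
    simpa using (hf.summable.tendsto_atTop_zero.const_mul α).sub
      (tendsto_steinTail (hasSum_natCast_sub_mul_zero hf hmean))
  exact sub_nonneg.1 (nonneg_of_sub_succ_eq_mul_of_tendsto_zero (fun k => (hpos (k + 1)).le)
    ((hslc.monotone_mul_div_sub hpos hα).add_const _) hdiff h0 hlim k)

end IsDiscreteSLC

/-- Equality case of the discrete one-sided Stein inequality: if `f ∈ discrete SLC(α)`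
with mean `μ` and equality `α·E[v(X+1)-v(X)] = E[(X-μ)v(X)]` holds for some strictly
increasing `v`, then `X` is Poisson with mean `α`. -/
theorem discrete_slc_stein_equality_poisson
    (f : ℕ → ℝ) (hpos : ∀ n, 0 < f n) (hsum : ∑' n : ℕ, f n = 1)
    (α : ℝ) (hα : 0 < α)
    (hslc : Antitone fun k : ℕ =>
      (if k = 0 then f 0 else f k - f (k - 1)) / f k + (k : ℝ) / α)
    (μ : ℝ) (hmeanS : Summable fun n : ℕ => (n : ℝ) * f n) (hmean : ∑' n : ℕ, (n : ℝ) * f n = μ)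
    (v : ℕ → ℝ) (hv : StrictMono v)
    (hint : Summable fun k : ℕ => |v k| * f k * (1 + (k : ℝ)))
    (heq : α * ∑' k : ℕ, (v (k + 1) - v k) * f k = ∑' k : ℕ, ((k : ℝ) - μ) * v k * f k) :
    ∀ n : ℕ, f n = Real.exp (-α) * α ^ n / n.factorial := by
  have hf : HasSum f 1 := by
    by_cases h : Summable f
    · exact hsum ▸ h.hasSum
    · simp [tsum_eq_zero_of_not_summable h] at hsum
  have hmean' : HasSum (fun n : ℕ => (n : ℝ) * f n) μ := hmean ▸ hmeanS.hasSum
  have hμ : 0 < μ :=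
    (hpos 1).trans_le (by simpa using le_hasSum hmean' 1 fun j _ => by have := hpos j; positivity)
  have hR := hasSum_sub_mul_steinTail hv.monotone (fun k => (hpos k).le) hμ.le
    (hasSum_natCast_sub_mul_zero hf hmean')
    (summable_natCast_sub_mul_mul (fun k => (hpos k).le) μ hint)
  rw [← heq, ← tsum_mul_left] at hR
  have hTf : steinTail f μ = fun k => α * f k := by
    refine eq_of_le_of_hasSum_mul_tsum (fun k => sub_pos.2 (hv k.lt_succ_self))
      (steinTail_nonneg (fun k => (hpos k).le) hμ.le (hasSum_natCast_sub_mul_zero hf hmean'))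
      (fun h => ?_) (IsDiscreteSLC.steinTail_le hslc hpos hα hf hmean')
      (by simpa only [mul_left_comm] using hR)
    have := congrFun h 0
    rw [steinTail_zero] at this
    exact (mul_pos hμ (hpos 0)).ne' this
  have hμα : μ = α := mul_right_cancel₀ (hpos 0).ne' (steinTail_zero.symm.trans (congrFun hTf 0))
  refine eq_exp_neg_mul_pow_div_factorial hf fun k => ?_
  have := steinTail_sub_succ (f := f) (μ := μ) k
  rw [hTf, hμα] at this
  linear_combination -this
end

section
/- Let X be an ℕ-valued random variable with pmf f ∈ discrete SLC(α). Then Var(X) ≤ α. -/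
/-!
Put `H k = ∇f(k) / f(k) + k / α`, non-increasing by assumption. Summation by parts gives
`∑ (k - μ) ∇f(k) = -∑ f(k) = -1`, and `∑ (k - μ) k f(k) = Var X`, so
`E[(X - μ) H(X)] = -1 + Var X / α`. Since `X - μ` and `H(X) - H(⌈μ⌉)` have opposite signs and
`E[X - μ] = 0`, this covariance is nonpositive, which is `Var X ≤ α`.
-/

/-- The backward difference `∇f(k) = f(k) - f(k - 1)`, with the convention `f(-1) = 0`. -/
def backwardDiff {M : Type*} [Sub M] (f : ℕ → M) (k : ℕ) : M :=
  if k = 0 then f 0 else f k - f (k - 1)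

section backwardDiff

variable {M : Type*} [Sub M] (f : ℕ → M)

@[simp]
theorem backwardDiff_zero : backwardDiff f 0 = f 0 := rfl

@[simp]
theorem backwardDiff_succ (k : ℕ) : backwardDiff f (k + 1) = f (k + 1) - f k := rfl

end backwardDiff

theorem HasSum.mul_backwardDiff {R : Type*} [Ring R] [TopologicalSpace R] [IsTopologicalRing R]
    {f v : ℕ → R} {a b : R} (hv : HasSum (fun k => v k * f k) a)
    (hv' : HasSum (fun k => v (k + 1) * f k) b) :
    HasSum (fun k => v k * backwardDiff f k) (a - b) := by
  have htail : HasSum (fun k => v (k + 1) * f (k + 1)) (a - v 0 * f 0) := by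
    simpa using (hasSum_nat_add_iff' 1).2 hv
  have hshift : HasSum (fun k => v (k + 1) * backwardDiff f (k + 1)) (a - v 0 * f 0 - b) := by
    simpa only [backwardDiff_succ, mul_sub] using htail.sub hv'
  convert HasSum.zero_add (f := fun k => v k * backwardDiff f k) hshift using 1
  rw [backwardDiff_zero]
  abel

theorem Antitone.natCast_sub_mul_sub_ceil_nonpos {H : ℕ → ℝ} (hH : Antitone H) (μ : ℝ) (k : ℕ) :
    ((k : ℝ) - μ) * (H k - H ⌈μ⌉₊) ≤ 0 := by
  rcases le_or_gt μ k with hk | hk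
  · exact mul_nonpos_of_nonneg_of_nonpos (sub_nonneg.2 hk) (sub_nonpos.2 (hH (Nat.ceil_le.2 hk)))
  · have hkc : k ≤ ⌈μ⌉₊ := by exact_mod_cast hk.le.trans (Nat.le_ceil μ)
    exact mul_nonpos_of_nonpos_of_nonneg (sub_nonpos.2 hk.le) (sub_nonneg.2 (hH hkc))

theorem Antitone.hasSum_sub_mul_mul_nonpos {f H : ℕ → ℝ} {μ s : ℝ} (hH : Antitone H)
    (hf : ∀ k, 0 ≤ f k) (hcent : HasSum (fun k : ℕ => ((k : ℝ) - μ) * f k) 0)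
    (hs : HasSum (fun k : ℕ => ((k : ℝ) - μ) * H k * f k) s) : s ≤ 0 := by
  set c := H ⌈μ⌉₊
  have hle : ∀ k : ℕ, ((k : ℝ) - μ) * H k * f k ≤ c * (((k : ℝ) - μ) * f k) := fun k => by
    nlinarith [mul_nonpos_of_nonpos_of_nonneg (hH.natCast_sub_mul_sub_ceil_nonpos μ k) (hf k)]
  simpa using hasSum_le hle hs (hcent.mul_left c)

/-- Variance bound for discrete SLC pmfs: if `X` is ℕ-valued with pmf `f ∈ discrete
SLC(α)` and finite second moment, then `Var(X) ≤ α`. -/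
theorem discrete_slc_variance_le
    (f : ℕ → ℝ) (hpos : ∀ n, 0 < f n) (hsum : ∑' n : ℕ, f n = 1)
    (α : ℝ) (hα : 0 < α)
    (hslc : Antitone fun k : ℕ =>
      (if k = 0 then f 0 else f k - f (k - 1)) / f k + (k : ℝ) / α)
    (μ : ℝ) (hmeanS : Summable fun n : ℕ => (n : ℝ) * f n) (hmean : ∑' n : ℕ, (n : ℝ) * f n = μ)
    (hsq : Summable fun n : ℕ => (n : ℝ) ^ 2 * f n) :
    ∑' n : ℕ, ((n : ℝ) - μ) ^ 2 * f n ≤ α := by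
  have hf : HasSum f 1 := by
    have : Summable f := by
      by_contra h
      simp [tsum_eq_zero_of_not_summable h] at hsum
    exact hsum ▸ this.hasSum
  have hcent : HasSum (fun n : ℕ => ((n : ℝ) - μ) * f n) 0 := by
    simpa [hmean, sub_mul] using hmeanS.hasSum.sub (hf.mul_left μ)
  obtain ⟨V, hV⟩ : ∃ V, HasSum (fun n : ℕ => ((n : ℝ) - μ) * n * f n) V :=
    (hsq.sub (hmeanS.mul_left μ)).congr fun n => by ring
  have hvar : HasSum (fun n : ℕ => ((n : ℝ) - μ) ^ 2 * f n) V := by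
    simpa using (hV.sub (hcent.mul_left μ)).congr_fun fun n => by ring
  have hparts : HasSum (fun n : ℕ => ((n : ℝ) - μ) * backwardDiff f n) (-1) := by
    have hshift : HasSum (fun n : ℕ => ((n + 1 : ℕ) - μ) * f n) 1 := by
      simpa using (hcent.add hf).congr_fun fun n => by ring
    simpa using hcent.mul_backwardDiff hshift
  have hcov : HasSum (fun n : ℕ => ((n : ℝ) - μ) * (backwardDiff f n / f n + n / α) * f n)
      (-1 + V / α) :=
    (hparts.add (hV.div_const α)).congr_fun fun n => by field_simp [(hpos n).ne']
  have := hslc.hasSum_sub_mul_mul_nonpos (fun n => (hpos n).le) hcent hcov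
  rw [hvar.tsum_eq, ← div_le_one hα]
  linarith
end

section
/- If f: ℕ → (0,∞) is a pmf satisfying ∇f(n)/f(n) + n/α = c for all n ≥ 0 for some constant c (where ∇f(0) = f(0), ∇f(n) = f(n) − f(n−1)), then c = 1 and f is the Poisson(α) pmf: f(n) = e^{-α}αⁿ/n!. -/
/-!
At `n = 0` the equation reads `1 = c`. For `n ≥ 1` it then becomes `f (n - 1) / f n = n / α`,
the recurrence of the Poisson weights, so `f n = f 0 * αⁿ / n!`; summing the exponential series
gives `f 0 * exp α = 1`.
-/

open Nat

lemma Real.hasSum_pow_div_factorial (x : ℝ) : HasSum (fun n : ℕ ↦ x ^ n / n !) (Real.exp x) := by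
  rw [Real.exp_eq_exp_ℝ]
  exact NormedSpace.expSeries_div_hasSum_exp x

lemma eq_mul_pow_div_factorial_of_succ_mul {f : ℕ → ℝ} {α : ℝ}
    (h : ∀ n : ℕ, (n + 1 : ℝ) * f (n + 1) = α * f n) (n : ℕ) :
    f n = f 0 * (α ^ n / n !) := by
  induction n with
  | zero => simp
  | succ k ih =>
    have hk : (k + 1 : ℝ) ≠ 0 := by positivity
    rw [eq_div_of_mul_eq hk ((mul_comm _ _).trans (h k)), ih, factorial_succ]
    push_cast
    field_simp
    ring

lemma mul_eq_mul_of_sub_div_add_div_eq_one {x y α m : ℝ} (hy : y ≠ 0) (hα : α ≠ 0)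
    (h : (y - x) / y + m / α = 1) : m * y = α * x := by
  field_simp at h
  linarith

/-- If a positive pmf `f : ℕ → ℝ` satisfies `∇f(n)/f(n) + n/α = c` for all `n` (where
`∇f(0) = f(0)` and `∇f(n) = f(n) - f(n-1)`), then `c = 1` and `f` is the Poisson(α) pmf. -/
theorem discrete_slc_constant_is_poisson
    (f : ℕ → ℝ) (hpos : ∀ n, 0 < f n) (hsum : ∑' n, f n = 1)
    (α : ℝ) (hα : 0 < α) (c : ℝ)
    (hconst : ∀ n : ℕ,
      (if n = 0 then f 0 else f n - f (n - 1)) / f n + (n : ℝ) / α = c) :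
    c = 1 ∧ ∀ n : ℕ, f n = Real.exp (-α) * α ^ n / n.factorial := by
  have hc : c = 1 := by simpa [div_self (hpos 0).ne'] using (hconst 0).symm
  have hrec : ∀ n : ℕ, (n + 1 : ℝ) * f (n + 1) = α * f n := fun n ↦ by
    refine mul_eq_mul_of_sub_div_add_div_eq_one (hpos (n + 1)).ne' hα.ne' ?_
    simpa [hc] using hconst (n + 1)
  have hform := eq_mul_pow_div_factorial_of_succ_mul hrec
  have hf0 : f 0 * Real.exp α = 1 := by
    rw [← hsum, ((Real.hasSum_pow_div_factorial α).mul_left (f 0)).tsum_eq.symm.trans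
      (tsum_congr fun n ↦ (hform n).symm)]
  refine ⟨hc, fun n ↦ ?_⟩
  rw [hform n, Real.exp_neg, eq_inv_of_mul_eq_one_left hf0, mul_div_assoc]
end

section
/- If f: ℝ → (0,∞) is a differentiable probability density with mean μ satisfying f'(x)/f(x) + (x − μ)/α = A for all x in its (interval) support, for constants A ∈ ℝ and α > 0, then A = 0 and f is the Gaussian density N(μ, α): f(x) = (2πα)^{-1/2} exp(−(x−μ)²/(2α)). -/
/-!
The equation says that `log f` has derivative `-(x - m) / α` with `m = μ + A α`, so `f` is a
constant multiple of the `N(m, α)` density. Total mass one forces the constant to be `1`, and then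
the mean of `f` is `m`; comparing with the given mean `μ` gives `A α = 0`, i.e. `A = 0` and `m = μ`.
-/

open MeasureTheory ProbabilityTheory Real
open scoped NNReal

theorem eq_mul_exp_sub_of_hasDerivAt_logDeriv {f g : ℝ → ℝ} (hf : Differentiable ℝ f)
    (hpos : ∀ x, 0 < f x) (hg : ∀ x, HasDerivAt g (logDeriv f x) x) (a x : ℝ) :
    f x = f a * exp (g x - g a) := by
  have hderiv : ∀ y, HasDerivAt (fun y => log (f y) - g y) 0 y := fun y =>
    (((hf y).hasDerivAt.log (hpos y).ne').sub (hg y)).congr_deriv (sub_self _)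
  have hconst : log (f x) - g x = log (f a) - g a :=
    is_const_of_deriv_eq_zero (fun y => (hderiv y).differentiableAt)
      (fun y => (hderiv y).deriv) x a
  rw [← exp_log (hpos x), ← exp_log (hpos a), ← exp_add]
  congr 1
  linarith

theorem exists_eq_mul_gaussianPDFReal_of_logDeriv_eq {f : ℝ → ℝ} (hf : Differentiable ℝ f)
    (hpos : ∀ x, 0 < f x) {m : ℝ} {v : ℝ≥0} (hv : v ≠ 0)
    (hlog : ∀ x, logDeriv f x = -(x - m) / v) :
    ∃ c, ∀ x, f x = c * gaussianPDFReal m v x := by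
  have hg : ∀ x, HasDerivAt (fun x => -(x - m) ^ 2 / (2 * v)) (logDeriv f x) x := fun x => by
    refine ((((hasDerivAt_id' x).sub_const m).pow 2).neg.div_const (2 * (v : ℝ))).congr_deriv ?_
    have hv' : (v : ℝ) ≠ 0 := by exact_mod_cast hv
    rw [hlog]
    field_simp
    ring
  have hsqrt : √(2 * π * v) ≠ 0 := by positivity
  refine ⟨f m * √(2 * π * v), fun x => ?_⟩
  rw [eq_mul_exp_sub_of_hasDerivAt_logDeriv hf hpos hg m x, gaussianPDFReal]
  field_simp
  ring_nf

theorem integral_mul_gaussianPDFReal (m : ℝ) {v : ℝ≥0} (hv : v ≠ 0) :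
    ∫ x, x * gaussianPDFReal m v x = m := by
  simpa [mul_comm] using (integral_gaussianReal_eq_integral_smul (f := id) hv).symm.trans
    (integral_id_gaussianReal (μ := m) (v := v))

theorem density_ode_is_gaussian_general
    (f : ℝ → ℝ) (hf : Differentiable ℝ f) (hfpos : ∀ x, 0 < f x)
    (α : ℝ) (hα : 0 < α) (A : ℝ)
    (hprob : ∫ x, f x = 1)
    (μ : ℝ) (hmean : ∫ x, x * f x = μ)
    (hode : ∀ x, deriv f x / f x + (x - μ) / α = A) :
    A = 0 ∧
      ∀ x, f x = (Real.sqrt (2 * Real.pi * α))⁻¹ * Real.exp (-(x - μ) ^ 2 / (2 * α)) := by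
  lift α to ℝ≥0 using hα.le
  have hα₀ : α ≠ 0 := by exact_mod_cast hα.ne'
  have hlog : ∀ x, logDeriv f x = -(x - (μ + A * α)) / α := fun x => by
    rw [logDeriv_apply, ← hode x]
    field_simp
    ring
  obtain ⟨c, hc⟩ := exists_eq_mul_gaussianPDFReal_of_logDeriv_eq hf hfpos hα₀ hlog
  have hc_one : c = 1 := by
    simpa only [hc, integral_const_mul, integral_gaussianPDFReal_eq_one _ hα₀, mul_one] using hprob
  simp only [hc_one, one_mul] at hc
  have hAα : A * α = 0 := by
    have hmean' : ∫ x, x * f x = μ + A * α := by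
      simp only [hc]
      exact integral_mul_gaussianPDFReal _ hα₀
    linarith
  have hA : A = 0 := (mul_eq_zero.mp hAα).resolve_right hα.ne'
  refine ⟨hA, fun x => ?_⟩
  rw [hc, hA, zero_mul, add_zero]
  rfl

/-- Differential-equation characterization of the Gaussian: if a positive differentiable
probability density `f` with mean `μ` satisfies `f'(x)/f(x) + (x-μ)/α = A` for all `x`,
then `A = 0` and `f` is the `N(μ, α)` density. -/
theorem density_ode_is_gaussian
    (f : ℝ → ℝ) (hf : Differentiable ℝ f) (hfpos : ∀ x, 0 < f x)
    (α : ℝ) (hα : 0 < α) (A : ℝ)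
    (hprob : ∫ x, f x = 1)
    (μ : ℝ) (hmeanInt : Integrable fun x => x * f x) (hmean : ∫ x, x * f x = μ)
    (hode : ∀ x, deriv f x / f x + (x - μ) / α = A) :
    A = 0 ∧
      ∀ x, f x = (Real.sqrt (2 * Real.pi * α))⁻¹ * Real.exp (-(x - μ) ^ 2 / (2 * α)) :=
  density_ode_is_gaussian_general f hf hfpos α hα A hprob μ hmean hode
end

section
/- Let X be a random variable on {0,…,N} with mean μ and pmf f ∈ SLC_N(α), and v: {0,…,N} → ℝ strictly increasing. Then α·E[((N−X)/N)(v(X+1) − v(X))·1_{X<N}] ≥ E[(X − μ)v(X)]. In particular, taking v(x) = x − μ gives Var(X) ≤ α(1 − μ/N). -/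
/-!
Write `g n = (N - n) / N * f n`. Then `∇_N f` is the backward difference of `g`, and `g N = 0`,
so summation by parts gives `E[(∇_N f / f)(X) w(X)] = -E[∇_N* w(X)]`; in particular the score
`u = ∇_N f / f + (n - μ) / α` has mean zero. As `u` is non-increasing and `w` non-decreasing,
Chebyshev's sum inequality gives `E[u w] ≤ E[u] E[w] = 0`, which rearranges to the Stein
inequality. For `w n = n - μ` one has `∇_N* w n = (N - n) / N`, of mean `1 - μ / N`.
-/

open Finset

theorem AntivaryOn.sum_mul_sum_mul_mul_le {ι : Type*} {s : Finset ι} {w u v : ι → ℝ}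
    (hw : ∀ i ∈ s, 0 ≤ w i) (huv : AntivaryOn u v s) :
    (∑ i ∈ s, w i) * ∑ i ∈ s, u i * v i * w i ≤
      (∑ i ∈ s, u i * w i) * ∑ i ∈ s, v i * w i := by
  have hpairs : ∑ i ∈ s, ∑ j ∈ s, w i * w j * ((u i - u j) * (v i - v j)) ≤ 0 :=
    sum_nonpos fun i hi => sum_nonpos fun j hj =>
      mul_nonpos_of_nonneg_of_nonpos (mul_nonneg (hw i hi) (hw j hj))
        (huv.sub_mul_sub_nonpos hj hi)
  have hexpand : ∑ i ∈ s, ∑ j ∈ s, w i * w j * ((u i - u j) * (v i - v j)) =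
      (∑ i ∈ s, w i) * (∑ i ∈ s, u i * v i * w i) -
        (∑ i ∈ s, u i * w i) * (∑ i ∈ s, v i * w i) -
        (∑ i ∈ s, v i * w i) * (∑ i ∈ s, u i * w i) +
        (∑ i ∈ s, u i * v i * w i) * (∑ i ∈ s, w i) := by
    simp_rw [sum_mul_sum, ← sum_sub_distrib, ← sum_add_distrib]
    exact sum_congr rfl fun i _ => sum_congr rfl fun j _ => by ring
  linarith

theorem sum_range_succ_sub_prev_mul (g w : ℕ → ℝ) (K : ℕ) :
    ∑ n ∈ range (K + 1), (g n - if n = 0 then 0 else g (n - 1)) * w n =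
      g K * w K - ∑ n ∈ range K, g n * (w (n + 1) - w n) := by
  induction K with
  | zero => simp
  | succ K ih =>
    rw [sum_range_succ, ih, sum_range_succ, if_neg K.succ_ne_zero, Nat.add_sub_cancel]
    ring

noncomputable def nablaN (N : ℕ) (f : ℕ → ℝ) (n : ℕ) : ℝ :=
  if n = 0 then f 0 else (((N : ℝ) - n) / N) * f n - (((N : ℝ) - n + 1) / N) * f (n - 1)

section

variable {N : ℕ} {f : ℕ → ℝ} {α μ : ℝ}

theorem nablaN_eq_sub_prev (hN : N ≠ 0) (n : ℕ) :
    nablaN N f n = ((N : ℝ) - n) / N * f n -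
      if n = 0 then 0 else ((N : ℝ) - (n - 1 : ℕ)) / N * f (n - 1) := by
  rcases n with _ | n
  · simp [nablaN, hN]
  · simp only [nablaN, if_neg n.succ_ne_zero, Nat.add_sub_cancel]
    push_cast
    ring

theorem sum_nablaN_mul (hN : N ≠ 0) (w : ℕ → ℝ) :
    ∑ n ∈ range (N + 1), nablaN N f n * w n =
      -∑ n ∈ range N, ((N : ℝ) - n) / N * (w (n + 1) - w n) * f n := by
  simp_rw [nablaN_eq_sub_prev hN]
  rw [sum_range_succ_sub_prev_mul (fun n => ((N : ℝ) - n) / N * f n), sub_self, zero_div,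
    zero_mul, zero_mul, zero_sub]
  congr 1
  exact sum_congr rfl fun n _ => by ring

theorem sum_nablaN (hN : N ≠ 0) : ∑ n ∈ range (N + 1), nablaN N f n = 0 := by
  simpa using sum_nablaN_mul (f := f) hN fun _ => 1


theorem sum_nablaN_div_add_mul_mul (hf : ∀ n ≤ N, f n ≠ 0) (q : ℕ → ℝ) :
    ∑ n ∈ range (N + 1), (nablaN N f n / f n + ((n : ℝ) - μ) / α) * q n * f n =
      ∑ n ∈ range (N + 1), nablaN N f n * q n +
        (∑ n ∈ range (N + 1), ((n : ℝ) - μ) * q n * f n) / α := by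
  rw [sum_div, ← sum_add_distrib]
  refine sum_congr rfl fun n hn => ?_
  have := hf n (Nat.lt_succ_iff.mp (mem_range.mp hn))
  field_simp

theorem sum_sub_mul_mul_le_mul_sum_of_antitoneOn (hN : N ≠ 0) (hpos : ∀ n ≤ N, 0 < f n)
    (hsum : ∑ n ∈ range (N + 1), f n = 1) (hα : 0 < α)
    (hmean : ∑ n ∈ range (N + 1), (n : ℝ) * f n = μ)
    (hslc : AntitoneOn (fun n : ℕ => nablaN N f n / f n + ((n : ℝ) - μ) / α) (Set.Iic N))
    {w : ℕ → ℝ} (hw : MonotoneOn w (Set.Iic N)) :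
    ∑ n ∈ range (N + 1), ((n : ℝ) - μ) * w n * f n ≤
      α * ∑ n ∈ range N, ((N : ℝ) - n) / N * (w (n + 1) - w n) * f n := by
  have hrange : ((range (N + 1) : Finset ℕ) : Set ℕ) ⊆ Set.Iic N := fun n hn => by
    simpa [Nat.lt_succ_iff] using hn
  have hf : ∀ n ≤ N, f n ≠ 0 := fun n hn => (hpos n hn).ne'
  have hcheb := (hslc.mono hrange).antivaryOn (hw.mono hrange)
    |>.sum_mul_sum_mul_mul_le fun n hn => (hpos n (Nat.lt_succ_iff.mp (mem_range.mp hn))).le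
  have hcentered : ∑ n ∈ range (N + 1), ((n : ℝ) - μ) * f n = 0 := by
    simp_rw [sub_mul, sum_sub_distrib, ← mul_sum, hmean, hsum, mul_one, sub_self]
  have hscore_mean :
      ∑ n ∈ range (N + 1), (nablaN N f n / f n + ((n : ℝ) - μ) / α) * f n = 0 := by
    simpa [sum_nablaN hN, hcentered] using
      sum_nablaN_div_add_mul_mul (α := α) (μ := μ) hf fun _ => 1
  simp only [Nat.succ_eq_add_one] at hcheb
  rw [hsum, one_mul, hscore_mean, zero_mul, sum_nablaN_div_add_mul_mul hf,
    sum_nablaN_mul hN] at hcheb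
  rw [← div_le_iff₀' hα]
  linarith

theorem sum_range_sub_div_mul (hN : N ≠ 0) (hsum : ∑ n ∈ range (N + 1), f n = 1)
    (hmean : ∑ n ∈ range (N + 1), (n : ℝ) * f n = μ) :
    ∑ n ∈ range N, ((N : ℝ) - n) / N * f n = 1 - μ / N := by
  have hN' : (N : ℝ) ≠ 0 := Nat.cast_ne_zero.mpr hN
  calc ∑ n ∈ range N, ((N : ℝ) - n) / N * f n
      = ∑ n ∈ range (N + 1), ((N : ℝ) - n) / N * f n := by simp [sum_range_succ]
    _ = ∑ n ∈ range (N + 1), f n - (∑ n ∈ range (N + 1), (n : ℝ) * f n) / N := by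
      rw [sum_div, ← sum_sub_distrib]
      exact sum_congr rfl fun n _ => by field_simp
    _ = 1 - μ / N := by rw [hsum, hmean]

end

/-- One-sided Stein inequality for pmfs on `{0,…,N}` in `SLC_N(α)`: if `u(n) =
∇_N f(n)/f(n) + (n-μ)/α` is non-increasing on `{0,…,N}` and `v` is strictly increasing
on `{0,…,N}`, then `α·E[∇_N* v(X)] ≥ E[(X-μ)v(X)]`; in particular (taking `v(x) = x - μ`)
`Var(X) ≤ α(1 - μ/N)`. -/
theorem slcN_one_sided_stein_and_variance
    (N : ℕ) (hN : 0 < N)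
    (f : ℕ → ℝ) (hpos : ∀ n, n ≤ N → 0 < f n)
    (hsum : ∑ n ∈ range (N + 1), f n = 1)
    (α : ℝ) (hα : 0 < α)
    (μ : ℝ) (hmean : ∑ n ∈ range (N + 1), (n : ℝ) * f n = μ)
    (hslc : ∀ m n : ℕ, m ≤ n → n ≤ N →
      (if n = 0 then f 0
        else (((N : ℝ) - n) / N) * f n - (((N : ℝ) - n + 1) / N) * f (n - 1)) / f n +
          ((n : ℝ) - μ) / α
      ≤ (if m = 0 then f 0
        else (((N : ℝ) - m) / N) * f m - (((N : ℝ) - m + 1) / N) * f (m - 1)) / f m +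
          ((m : ℝ) - μ) / α)
    (v : ℕ → ℝ) (hv : ∀ m n : ℕ, m < n → n ≤ N → v m < v n) :
    α * ∑ n ∈ range N, (((N : ℝ) - n) / N) * (v (n + 1) - v n) * f n
        ≥ ∑ n ∈ range (N + 1), ((n : ℝ) - μ) * v n * f n ∧
      ∑ n ∈ range (N + 1), ((n : ℝ) - μ) ^ 2 * f n ≤ α * (1 - μ / N) := by
  have hscore : AntitoneOn (fun n : ℕ => nablaN N f n / f n + ((n : ℝ) - μ) / α) (Set.Iic N) :=
    fun m _ n hn hmn => hslc m n hmn hn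
  have hstein {w : ℕ → ℝ} (hw : MonotoneOn w (Set.Iic N)) :=
    sum_sub_mul_mul_le_mul_sum_of_antitoneOn hN.ne' hpos hsum hα hmean hscore hw
  have hv_mono : MonotoneOn v (Set.Iic N) :=
    StrictMonoOn.monotoneOn fun m _ n hn hmn => hv m n hmn hn
  have hid_mono : MonotoneOn (fun n : ℕ => (n : ℝ) - μ) (Set.Iic N) :=
    fun m _ n _ hmn => by simpa using hmn
  refine ⟨hstein hv_mono, ?_⟩
  have hvar := hstein hid_mono
  simpa [← sq, sum_range_sub_div_mul hN.ne' hsum hmean] using hvar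
end
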